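/- arXiv:1612.01464 — 4 statements merged into one kernel-verified Lean document; each statement's English description precedes it below -/
import Mathlib

section
/- Let A := ℂ^{d_A} and K := ℂ^{d_K} with d_A, d_K ∈ ℕ, and let ρ be a faithful state on K (a positive definite d_K×d_K complex matrix of trace 1). For each n ∈ ℕ, let E_{n*} : M_{d_K}(ℂ) → M_{d_A}(ℂ) ⊗ M_{d_K}(ℂ) be a linear map that is completely positive and trace preserving, and assume Tr_A[E_{n*}(ρ)] = ρ for every n. Define τ_1 := E_{1*}(ρ), τ_n := (id_{M_{d_A}(ℂ)^{⊗(n−1)}} ⊗ E_{n*})(τ_{n−1}) for n ≥ 2, ρ_n := Tr_K[τ_n] (a state on A^{⊗n}), and ρ̃_n := Tr_K[E_{n*}(ρ)] (a state on A). Then there exists R > 1 such that ρ_n ≤ R·ρ_{n−1} ⊗ ρ̃_n in the Loewner order for every n ≥ 2. -/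
open Matrix MeasureTheory
open scoped ComplexOrder

noncomputable section

namespace QHT

variable {ι : Type*} [Fintype ι] [DecidableEq ι]

/- Functional calculus for (Hermitian) matrices, via the spectral theorem.
Junk value `0` if the matrix is not Hermitian. -/
noncomputable def matFun (f : ℝ → ℝ) (A : Matrix ι ι ℂ) : Matrix ι ι ℂ :=
  if hA : A.IsHermitian then
    (hA.eigenvectorUnitary : Matrix ι ι ℂ) *
      Matrix.diagonal (fun i => (f (hA.eigenvalues i) : ℂ)) *
      star (hA.eigenvectorUnitary : Matrix ι ι ℂ)
  else 0

/-- Matrix logarithm (of a Hermitian matrix). -/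
noncomputable def matLog (A : Matrix ι ι ℂ) : Matrix ι ι ℂ := matFun Real.log A

/-- Matrix square root (of a Hermitian matrix). -/
noncomputable def matSqrt (A : Matrix ι ι ℂ) : Matrix ι ι ℂ := matFun Real.sqrt A

/-- Quantum relative entropy `D(ρ‖σ) = Tr[ρ (log ρ - log σ)]`. -/
noncomputable def relEntropy (ρ σ : Matrix ι ι ℂ) : ℝ :=
  ((ρ * (matLog ρ - matLog σ)).trace).re

/-- Quantum information variance `V(ρ‖σ) = Tr[ρ (log ρ - log σ)²] - D(ρ‖σ)²`. -/
noncomputable def relVar (ρ σ : Matrix ι ι ℂ) : ℝ :=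
  ((ρ * ((matLog ρ - matLog σ) * (matLog ρ - matLog σ))).trace).re - (relEntropy ρ σ) ^ 2

/-- A state: positive semidefinite with trace one. -/
def IsState (ρ : Matrix ι ι ℂ) : Prop := ρ.PosSemidef ∧ ρ.trace = 1

/-- A faithful state: positive definite with trace one. -/
def IsFaithfulState (ρ : Matrix ι ι ℂ) : Prop := ρ.PosDef ∧ ρ.trace = 1

/-- A test: an operator `T` with `0 ≤ T ≤ I`. -/
def IsTest (T : Matrix ι ι ℂ) : Prop := T.PosSemidef ∧ (1 - T).PosSemidef

/-- Type I error `α(T) = Tr[(I - T) ρ]`. -/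
noncomputable def typeI (ρ T : Matrix ι ι ℂ) : ℝ := ((ρ * (1 - T)).trace).re

/-- Type II error `β(T) = Tr[T σ]`. -/
noncomputable def typeII (σ T : Matrix ι ι ℂ) : ℝ := ((σ * T).trace).re

/-- Optimal type II (Stein) error under the constraint `α(T) ≤ ε`. -/
noncomputable def steinErr (ρ σ : Matrix ι ι ℂ) (ε : ℝ) : ℝ :=
  sInf {b : ℝ | ∃ T : Matrix ι ι ℂ, IsTest T ∧ typeI ρ T ≤ ε ∧ typeII σ T = b}

/-- The ε-hypothesis testing relative entropy. -/
noncomputable def DH (ρ σ : Matrix ι ι ℂ) (ε : ℝ) : ℝ := - Real.log (steinErr ρ σ ε)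

/- `‖log Δ_{σ|ρ} + D(ρ‖σ) id‖`, i.e. the maximum of
`|log μ - log λ + D(ρ‖σ)|` over eigenvalues `λ` of `ρ` and `μ` of `σ`. -/
open Classical in
noncomputable def shiftNorm (ρ σ : Matrix ι ι ℂ) : ℝ :=
  if h : ρ.IsHermitian ∧ σ.IsHermitian then
    ⨆ i : ι, ⨆ j : ι,
      |Real.log (h.2.eigenvalues j) - Real.log (h.1.eigenvalues i) + relEntropy ρ σ|
  else 0

/- Largest eigenvalue of a Hermitian matrix. -/
open Classical in
noncomputable def lamMax (A : Matrix ι ι ℂ) : ℝ :=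
  if hA : A.IsHermitian then ⨆ i : ι, hA.eigenvalues i else 0

/- Smallest eigenvalue of a Hermitian matrix. -/
open Classical in
noncomputable def lamMin (A : Matrix ι ι ℂ) : ℝ :=
  if hA : A.IsHermitian then ⨅ i : ι, hA.eigenvalues i else 0

/- The Loewner order: `A ≤ B` iff `B - A` is positive semidefinite. -/
def loewnerLE {κ : Type*} [Fintype κ] (A B : Matrix κ κ ℂ) : Prop := (B - A).PosSemidef

/-- Splitting off the last tensor factor: `(Fin (n+1) → X) ≃ (Fin n → X) × X`. -/
def splitLast (X : Type*) (n : ℕ) : (Fin (n + 1) → X) ≃ (Fin n → X) × X where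
  toFun f := (fun i => f i.castSucc, f (Fin.last n))
  invFun p := Fin.snoc p.1 p.2
  left_inv f := by
    funext i
    induction i using Fin.lastCases with
    | last => simp
    | cast i => simp
  right_inv p := by
    refine Prod.ext ?_ ?_
    · funext i; simp
    · simp

/-- The tensor product `A ⊗ B` of a state on `H^{⊗(n+1)}` with a state on `H`, viewed as a
state on `H^{⊗(n+2)}`. -/
noncomputable def tensorExt {d n : ℕ}
    (A : Matrix (Fin (n + 1) → Fin d) (Fin (n + 1) → Fin d) ℂ)
    (B : Matrix (Fin d) (Fin d) ℂ) :
    Matrix (Fin (n + 2) → Fin d) (Fin (n + 2) → Fin d) ℂ :=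
  Matrix.reindex (splitLast (Fin d) (n + 1)).symm (splitLast (Fin d) (n + 1)).symm
    (Matrix.kroneckerMap (· * ·) A B)

/-- The canonical identification `H^{⊗1} ≅ H` applied to a matrix. -/
noncomputable def asOne {d : ℕ} (A : Matrix (Fin 1 → Fin d) (Fin 1 → Fin d) ℂ) :
    Matrix (Fin d) (Fin d) ℂ :=
  Matrix.reindex (Equiv.funUnique (Fin 1) (Fin d)) (Equiv.funUnique (Fin 1) (Fin d)) A

/-- The canonical identification `H ≅ H^{⊗1}` applied to a matrix. -/
noncomputable def toOne {d : ℕ} (A : Matrix (Fin d) (Fin d) ℂ) :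
    Matrix (Fin 1 → Fin d) (Fin 1 → Fin d) ℂ :=
  Matrix.reindex (Equiv.funUnique (Fin 1) (Fin d)).symm (Equiv.funUnique (Fin 1) (Fin d)).symm A

/-- Tensor product `A 0 ⊗ A 1 ⊗ ⋯ ⊗ A (n-1)` of a family of matrices. -/
noncomputable def tensorFamily {dm : ℕ → ℕ} (n : ℕ)
    (A : (k : ℕ) → Matrix (Fin (dm k)) (Fin (dm k)) ℂ) :
    Matrix ((k : Fin n) → Fin (dm k)) ((k : Fin n) → Fin (dm k)) ℂ :=
  Matrix.of fun a b => ∏ k : Fin n, A k.1 (a k) (b k)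

/-- Rank-one spectral projection onto the `i`-th eigenvector of a Hermitian matrix. -/
noncomputable def eigProj {A : Matrix ι ι ℂ} (hA : A.IsHermitian) (i : ι) : Matrix ι ι ℂ :=
  Matrix.of fun a b =>
    (hA.eigenvectorUnitary : Matrix ι ι ℂ) a i * star ((hA.eigenvectorUnitary : Matrix ι ι ℂ) b i)

/- The mass `μ_{σ|ρ}(S)` of a set `S ⊆ ℝ` under the spectral measure of
`log Δ_{σ|ρ}` w.r.t. `Ω_ρ = ρ^{1/2}`:
`Σ Tr[P_μ(σ) ρ^{1/2} P_λ(ρ) ρ^{1/2}]` over eigenvalue pairs with `log μ - log λ ∈ S`. -/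
open Classical in
noncomputable def specMassSet (ρ σ : Matrix ι ι ℂ) (S : Set ℝ) : ℝ :=
  if h : ρ.IsHermitian ∧ σ.IsHermitian then
    ∑ i : ι, ∑ j : ι,
      if Real.log (h.2.eigenvalues j) - Real.log (h.1.eigenvalues i) ∈ S then
        ((eigProj h.2 j * matSqrt ρ * eigProj h.1 i * matSqrt ρ).trace).re
      else 0
  else 0

/- The spectral measure `μ_{σ|ρ}` of `log Δ_{σ|ρ}` with respect to `Ω_ρ = ρ^{1/2}`,
as a measure on `ℝ`. -/
open Classical in
noncomputable def specMeasure (ρ σ : Matrix ι ι ℂ) : Measure ℝ :=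
  if h : ρ.IsHermitian ∧ σ.IsHermitian then
    ∑ i : ι, ∑ j : ι,
      (ENNReal.ofReal (((eigProj h.2 j * matSqrt ρ * eigProj h.1 i * matSqrt ρ).trace).re)) •
        Measure.dirac (Real.log (h.2.eigenvalues j) - Real.log (h.1.eigenvalues i))
  else 0

/-- Binary relative entropy. -/
noncomputable def Dbin (p q : ℝ) : ℝ :=
  p * Real.log (p / q) + (1 - p) * Real.log ((1 - p) / (1 - q))

section Channels

variable {ι : Type*} [Fintype ι] [DecidableEq ι]
variable {X : Type*} [Fintype X] [DecidableEq X]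

/-- A POVM with `M` outcomes. -/
def IsPOVM {M : ℕ} (T : Fin M → Matrix ι ι ℂ) : Prop :=
  (∀ k, (T k).PosSemidef) ∧ ∑ k, T k = 1

/-- Average success probability of a code for a classical-quantum channel. -/
noncomputable def avgSuccess {M : ℕ} (W : X → Matrix ι ι ℂ)
    (x : Fin M → X) (T : Fin M → Matrix ι ι ℂ) : ℝ :=
  (1 / M : ℝ) * ∑ k, ((W (x k) * T k).trace).re

/-- Existence of a code of size `M` with average error at most `ε`. -/
def IsCode (W : X → Matrix ι ι ℂ) (M : ℕ) (ε : ℝ) : Prop :=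
  ∃ (x : Fin M → X) (T : Fin M → Matrix ι ι ℂ), IsPOVM T ∧ 1 - ε ≤ avgSuccess W x T

/-- One-shot ε-error capacity `C(W, ε) = log M*(W, ε)`. -/
noncomputable def capacity (W : X → Matrix ι ι ℂ) (ε : ℝ) : ℝ :=
  Real.log ((sSup {M : ℕ | IsCode W M ε} : ℕ) : ℝ)

/-- The average output state `W(p) = Σ_x p(x) W(x)`. -/
noncomputable def mix (W : X → Matrix ι ι ℂ) (p : X → ℝ) : Matrix ι ι ℂ :=
  ∑ x, (p x : ℂ) • W x

/-- The Holevo capacity `χ*(W) = sup_p Σ_x p(x) D(W(x)‖W(p))`. -/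
noncomputable def holevoCap (W : X → Matrix ι ι ℂ) : ℝ :=
  sSup {v : ℝ | ∃ p : X → ℝ, (∀ x, 0 ≤ p x) ∧ ∑ x, p x = 1 ∧
    v = ∑ x, p x * relEntropy (W x) (mix W p)}

/-- A probability mass function achieving the Holevo capacity. -/
def IsMaximizer (W : X → Matrix ι ι ℂ) (p : X → ℝ) : Prop :=
  (∀ x, 0 ≤ p x) ∧ ∑ x, p x = 1 ∧
    ∑ x, p x * relEntropy (W x) (mix W p) = holevoCap W

/-- The lifted state `ρ_p = Σ_x p(x) |x⟩⟨x| ⊗ W(x)`. -/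
noncomputable def liftRho (W : X → Matrix ι ι ℂ) (p : X → ℝ) : Matrix (X × ι) (X × ι) ℂ :=
  Matrix.of fun a b => if a.1 = b.1 then (p a.1 : ℂ) * W a.1 a.2 b.2 else 0

/-- The lifted state `σ_p = Σ_x p(x) |x⟩⟨x| ⊗ W(p)`. -/
noncomputable def liftSigma (W : X → Matrix ι ι ℂ) (p : X → ℝ) : Matrix (X × ι) (X × ι) ℂ :=
  Matrix.of fun a b => if a.1 = b.1 then (p a.1 : ℂ) * (mix W p) a.2 b.2 else 0

/-- The memoryless product channel `W^{⊗n}`. -/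
noncomputable def prodChannel {d : ℕ} (W : X → Matrix (Fin d) (Fin d) ℂ) (n : ℕ) :
    (Fin n → X) → Matrix (Fin n → Fin d) (Fin n → Fin d) ℂ :=
  fun x => Matrix.of fun a b => ∏ k, W (x k) (a k) (b k)

/-- The single-letter channel `W_1 : X → D(H)` underlying a channel family with memory. -/
noncomputable def chan1 {d : ℕ}
    (W : (n : ℕ) → (Fin (n + 1) → X) → Matrix (Fin (n + 1) → Fin d) (Fin (n + 1) → Fin d) ℂ) :
    X → Matrix (Fin d) (Fin d) ℂ :=
  fun x => asOne (W 0 (fun _ => x))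

end Channels

section CPmaps

/-- Amplification `id_F ⊗ Ψ` of a map `Ψ` on matrix algebras, acting blockwise. -/
noncomputable def ampl {F I J : Type*} [Fintype F] [Fintype I] [Fintype J]
    (Ψ : Matrix I I ℂ → Matrix J J ℂ) (M : Matrix (F × I) (F × I) ℂ) :
    Matrix (F × J) (F × J) ℂ :=
  Matrix.of fun p q => Ψ (Matrix.of fun a b => M (p.1, a) (q.1, b)) p.2 q.2

/-- Complete positivity of a map between matrix algebras. -/
def IsCP {I J : Type*} [Fintype I] [Fintype J]
    (Ψ : Matrix I I ℂ → Matrix J J ℂ) : Prop :=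
  ∀ (m : ℕ) (M : Matrix (Fin m × I) (Fin m × I) ℂ), M.PosSemidef → (ampl Ψ M).PosSemidef

/-- Trace preservation of a map between matrix algebras. -/
def IsTP {I J : Type*} [Fintype I] [Fintype J]
    (Ψ : Matrix I I ℂ → Matrix J J ℂ) : Prop :=
  ∀ x, (Ψ x).trace = x.trace

/-- Partial trace over the second tensor factor. -/
noncomputable def ptraceSnd {I K : Type*} [Fintype K] (M : Matrix (I × K) (I × K) ℂ) :
    Matrix I I ℂ :=
  Matrix.of fun a b => ∑ k, M (a, k) (b, k)

/-- Partial trace over the first tensor factor. -/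
noncomputable def ptraceFst {I K : Type*} [Fintype I] (M : Matrix (I × K) (I × K) ℂ) :
    Matrix K K ℂ :=
  Matrix.of fun i j => ∑ a, M (a, i) (a, j)

/-- Reindexing `A ⊗ K ≅ A^{⊗1} ⊗ K`. -/
def tauEquiv0 (dA dK : ℕ) : (Fin dA × Fin dK) ≃ ((Fin 1 → Fin dA) × Fin dK) :=
  Equiv.prodCongr (Equiv.funUnique (Fin 1) (Fin dA)).symm (Equiv.refl (Fin dK))

/-- Reindexing `A^{⊗(n+1)} ⊗ (A ⊗ K) ≅ A^{⊗(n+2)} ⊗ K`. -/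
def tauEquivS (dA dK n : ℕ) :
    ((Fin (n + 1) → Fin dA) × (Fin dA × Fin dK)) ≃ ((Fin (n + 2) → Fin dA) × Fin dK) :=
  (Equiv.prodAssoc (Fin (n + 1) → Fin dA) (Fin dA) (Fin dK)).symm.trans
    (Equiv.prodCongr (splitLast (Fin dA) (n + 1)).symm (Equiv.refl (Fin dK)))

/-- The states `τ_n` generated by a family of CPTP maps `E_n` and an initial state `ρ`:
`τ_1 = E_{1*}(ρ)`, `τ_{n+1} = (id^{⊗n} ⊗ E_{(n+1)*})(τ_n)` (here `fcsTau E ρ n` is `τ_{n+1}`). -/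
noncomputable def fcsTau {dA dK : ℕ}
    (E : ℕ → Matrix (Fin dK) (Fin dK) ℂ →ₗ[ℂ] Matrix (Fin dA × Fin dK) (Fin dA × Fin dK) ℂ)
    (ρ : Matrix (Fin dK) (Fin dK) ℂ) :
    (n : ℕ) → Matrix ((Fin (n + 1) → Fin dA) × Fin dK) ((Fin (n + 1) → Fin dA) × Fin dK) ℂ
  | 0 => Matrix.reindex (tauEquiv0 dA dK) (tauEquiv0 dA dK) (E 0 ρ)
  | n + 1 => Matrix.reindex (tauEquivS dA dK n) (tauEquivS dA dK n)
      (ampl (E (n + 1)) (fcsTau E ρ n))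

end CPmaps

end QHT

/-!
A positive semidefinite `M` on `F ⊗ K` satisfies `M ≤ d_K · (Tr_K M ⊗ 1)`: write
`1 = ∑ₖ 1 ⊗ |k⟩⟨k|` and apply the operator Cauchy–Schwarz inequality. Since `ρ` is faithful,
`r · 1 ≤ ρ` for some `r > 0`, so `τ_n ≤ (d_K / r) · ρ_n ⊗ ρ`. Applying the completely positive
map `id ⊗ E_{n+1}` and tracing out `K` gives `ρ_{n+1} ≤ (d_K / r) · ρ_n ⊗ ρ̃_{n+1}`, with a
constant independent of `n`.
-/

open scoped MatrixOrder Kronecker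

namespace Matrix

variable {𝕜 : Type*} [RCLike 𝕜] {n m ι : Type*}

theorem reindex_le_reindex {m' : Type*} (e : m ≃ m') {A B : Matrix m m 𝕜} (h : A ≤ B) :
    reindex e e A ≤ reindex e e B := by
  rw [le_iff, reindex_apply, reindex_apply]
  exact h.submatrix _

variable [Fintype n] [Fintype m]

theorem PosSemidef.conjTranspose_sum_mul_mul_sum_le {M : Matrix n n 𝕜} (hM : M.PosSemidef)
    (s : Finset ι) (V : ι → Matrix n m 𝕜) :
    (∑ i ∈ s, V i)ᴴ * M * ∑ i ∈ s, V i ≤ s.card • ∑ i ∈ s, (V i)ᴴ * M * V i := by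
  set D := s.card • ∑ i ∈ s, (V i)ᴴ * M * V i - (∑ i ∈ s, V i)ᴴ * M * ∑ i ∈ s, V i
  have hD : (2 : ℝ) • D = ∑ i ∈ s, ∑ j ∈ s, (V i - V j)ᴴ * M * (V i - V j) := by
    simp only [D, conjTranspose_sub, conjTranspose_sum, Matrix.sub_mul, Matrix.mul_sub,
      Matrix.sum_mul, Matrix.mul_sum, Finset.sum_sub_distrib, Finset.sum_const, smul_sub,
      ofNat_smul_eq_nsmul]
    rw [Finset.sum_comm (f := fun i j => (V j)ᴴ * M * V i), ← Finset.smul_sum]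
    abel
  have h2 : ((2 : ℝ) • D).PosSemidef := by
    rw [hD]
    exact posSemidef_sum _ fun i _ => posSemidef_sum _ fun j _ => hM.conjTranspose_mul_mul_same _
  have h := h2.smul (a := (2⁻¹ : ℝ)) (by norm_num)
  rwa [smul_smul, inv_mul_cancel₀ two_ne_zero, one_smul] at h

theorem PosDef.exists_pos_smul_one_le [DecidableEq n] {ρ : Matrix n n 𝕜} (hρ : ρ.PosDef) :
    ∃ r : ℝ, 0 < r ∧ r • (1 : Matrix n n 𝕜) ≤ ρ := by
  rcases isEmpty_or_nonempty n with hn | hn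
  · exact ⟨1, one_pos, le_of_eq (Subsingleton.elim _ _)⟩
  obtain ⟨r, hr, h⟩ := (CFC.exists_pos_algebraMap_le_iff hρ.isHermitian.isSelfAdjoint).2
    fun x hx => hρ.isStrictlyPositive.spectrum_pos hx
  exact ⟨r, hr, by rwa [Algebra.algebraMap_eq_smul_one] at h⟩

theorem kronecker_le_kronecker_left {A : Matrix m m 𝕜} {B C : Matrix n n 𝕜} (hA : A.PosSemidef)
    (h : B ≤ C) : A ⊗ₖ B ≤ A ⊗ₖ C := by
  have hsub : A ⊗ₖ C - A ⊗ₖ B = A ⊗ₖ (C - B) := by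
    ext; simp [mul_sub]
  rw [le_iff, hsub]
  exact hA.kronecker h

end Matrix

namespace QHT

section PartialTrace

variable {I K : Type*} [Fintype K]

theorem ptraceSnd_eq_sum_submatrix (M : Matrix (I × K) (I × K) ℂ) :
    ptraceSnd M = ∑ k, M.submatrix (·, k) (·, k) := by
  ext; simp [ptraceSnd, Matrix.sum_apply]

theorem posSemidef_ptraceSnd [Fintype I] {M : Matrix (I × K) (I × K) ℂ} (hM : M.PosSemidef) :
    (ptraceSnd M).PosSemidef := by
  rw [ptraceSnd_eq_sum_submatrix]
  exact posSemidef_sum _ fun k _ => hM.submatrix _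

theorem ptraceSnd_sub (M N : Matrix (I × K) (I × K) ℂ) :
    ptraceSnd (M - N) = ptraceSnd M - ptraceSnd N := by
  ext; simp [ptraceSnd]

theorem ptraceSnd_mono [Fintype I] {M N : Matrix (I × K) (I × K) ℂ} (h : M ≤ N) :
    ptraceSnd M ≤ ptraceSnd N := by
  rw [Matrix.le_iff, ← ptraceSnd_sub]
  exact posSemidef_ptraceSnd h

theorem ptraceSnd_reindex_prodAssoc_kronecker {J : Type*} (A : Matrix I I ℂ)
    (B : Matrix (J × K) (J × K) ℂ) :
    ptraceSnd (reindex (Equiv.prodAssoc I J K).symm (Equiv.prodAssoc I J K).symm (A ⊗ₖ B)) =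
      A ⊗ₖ ptraceSnd B := by
  ext; simp [ptraceSnd, Finset.mul_sum]

variable [DecidableEq I] [DecidableEq K]

theorem sum_one_kronecker_single_self : ∑ k : K, (1 : Matrix I I ℂ) ⊗ₖ single k k 1 = 1 := by
  ext ⟨a, i⟩ ⟨b, j⟩
  simp only [Matrix.sum_apply, kroneckerMap_apply, one_apply, single_apply, ite_and, mul_ite,
    mul_one, mul_zero, Finset.sum_ite_eq', Finset.mem_univ, ↓reduceIte, Prod.mk.injEq]
  grind

variable [Fintype I]

theorem conjTranspose_one_kronecker_single_mul_mul_apply (M : Matrix (I × K) (I × K) ℂ)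
    (k l : K) (a b : I) (i j : K) :
    (((1 : Matrix I I ℂ) ⊗ₖ single l k 1)ᴴ * M * ((1 : Matrix I I ℂ) ⊗ₖ single l k (1 : ℂ)) :
      Matrix (I × K) (I × K) ℂ) (a, i) (b, j) = if i = k ∧ j = k then M (a, l) (b, l) else 0 := by
  simp only [Matrix.mul_apply, conjTranspose_apply, kroneckerMap_apply, one_apply, single_apply,
    ite_and, mul_ite, mul_one, mul_zero, RCLike.star_def, apply_ite (starRingEnd ℂ), map_one,
    map_zero, ite_mul, one_mul, zero_mul, Fintype.sum_prod_type, Finset.sum_ite_eq,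
    Finset.mem_univ, ↓reduceIte, Finset.sum_ite_irrel, Finset.sum_ite_eq', Finset.sum_const_zero]
  grind

theorem ptraceSnd_kronecker_one_eq_sum (M : Matrix (I × K) (I × K) ℂ) :
    ptraceSnd M ⊗ₖ (1 : Matrix K K ℂ) =
      ∑ k, ∑ l, ((1 : Matrix I I ℂ) ⊗ₖ single l k 1)ᴴ * M * ((1 : Matrix I I ℂ) ⊗ₖ single l k 1) := by
  ext ⟨a, i⟩ ⟨b, j⟩
  simp only [Matrix.sum_apply, conjTranspose_one_kronecker_single_mul_mul_apply]
  simp only [ptraceSnd, kroneckerMap_apply, of_apply, one_apply, mul_ite, mul_one, mul_zero,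
    ite_and, Finset.sum_ite_irrel, Finset.sum_const_zero, Finset.sum_ite_eq, Finset.mem_univ,
    ↓reduceIte]
  grind

theorem le_card_nsmul_ptraceSnd_kronecker_one {M : Matrix (I × K) (I × K) ℂ} (hM : M.PosSemidef) :
    M ≤ Fintype.card K • (ptraceSnd M ⊗ₖ (1 : Matrix K K ℂ)) := by
  set W : K → K → Matrix (I × K) (I × K) ℂ := fun l k => (1 : Matrix I I ℂ) ⊗ₖ single l k 1
  calc M = (∑ k, W k k)ᴴ * M * ∑ k, W k k := by simp [W, sum_one_kronecker_single_self]
    _ ≤ Fintype.card K • ∑ k, (W k k)ᴴ * M * W k k := hM.conjTranspose_sum_mul_mul_sum_le _ _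
    _ ≤ Fintype.card K • ∑ k, ∑ l, (W l k)ᴴ * M * W l k := by
      refine nsmul_le_nsmul_right (Finset.sum_le_sum fun k _ => ?_) _
      exact Finset.single_le_sum (f := fun l => (W l k)ᴴ * M * W l k)
        (fun l _ => (hM.conjTranspose_mul_mul_same _).nonneg) (Finset.mem_univ k)
    _ = Fintype.card K • (ptraceSnd M ⊗ₖ 1) := by rw [ptraceSnd_kronecker_one_eq_sum]

theorem le_smul_ptraceSnd_kronecker {M : Matrix (I × K) (I × K) ℂ} (hM : M.PosSemidef)
    {ρ : Matrix K K ℂ} {r : ℝ} (hr : 0 < r) (hρ : r • 1 ≤ ρ) :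
    M ≤ (Fintype.card K / r) • (ptraceSnd M ⊗ₖ ρ) := by
  calc M ≤ Fintype.card K • (ptraceSnd M ⊗ₖ (1 : Matrix K K ℂ)) :=
        le_card_nsmul_ptraceSnd_kronecker_one hM
    _ = (Fintype.card K / r) • (ptraceSnd M ⊗ₖ (r • 1 : Matrix K K ℂ)) := by
      rw [kronecker_smul, smul_smul, div_mul_cancel₀ _ hr.ne', Nat.cast_smul_eq_nsmul]
    _ ≤ (Fintype.card K / r) • (ptraceSnd M ⊗ₖ ρ) := by
      gcongr
      exact kronecker_le_kronecker_left (posSemidef_ptraceSnd hM) hρ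

end PartialTrace

section CompletelyPositive

variable {I J : Type*} [Fintype I] [Fintype J]

theorem IsCP.posSemidef_ampl {Ψ : Matrix I I ℂ → Matrix J J ℂ} (hΨ : IsCP Ψ) {F : Type*}
    [Fintype F] {M : Matrix (F × I) (F × I) ℂ} (hM : M.PosSemidef) : (ampl Ψ M).PosSemidef := by
  let e := Fintype.equivFin F
  have h := hΨ _ _ (hM.submatrix (Prod.map e.symm id))
  convert h.submatrix (Prod.map e id) using 1
  ext; simp [ampl]

theorem IsCP.posSemidef_apply {Ψ : Matrix I I ℂ → Matrix J J ℂ} (hΨ : IsCP Ψ)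
    {X : Matrix I I ℂ} (hX : X.PosSemidef) : (Ψ X).PosSemidef := by
  have h := hΨ.posSemidef_ampl (F := Unit) (hX.submatrix Prod.snd)
  exact h.submatrix (fun j => ((), j))

variable {F : Type*} [Fintype F] (Ψ : Matrix I I ℂ →ₗ[ℂ] Matrix J J ℂ)

theorem ampl_sub (M N : Matrix (F × I) (F × I) ℂ) : ampl Ψ (M - N) = ampl Ψ M - ampl Ψ N := by
  ext p q
  change Ψ (M.submatrix (p.1, ·) (q.1, ·) - N.submatrix (p.1, ·) (q.1, ·)) p.2 q.2 = _
  rw [map_sub]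
  rfl

theorem ampl_smul (r : ℝ) (M : Matrix (F × I) (F × I) ℂ) : ampl Ψ (r • M) = r • ampl Ψ M := by
  ext p q
  change Ψ (r • M.submatrix (p.1, ·) (q.1, ·)) p.2 q.2 = _
  rw [LinearMap.map_smul_of_tower]
  rfl

theorem ampl_kronecker (A : Matrix F F ℂ) (B : Matrix I I ℂ) : ampl Ψ (A ⊗ₖ B) = A ⊗ₖ Ψ B := by
  ext p q
  change Ψ (A p.1 q.1 • B) p.2 q.2 = _
  rw [map_smul]
  rfl

theorem IsCP.ampl_mono {Ψ : Matrix I I ℂ →ₗ[ℂ] Matrix J J ℂ} (hΨ : IsCP Ψ)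
    {M N : Matrix (F × I) (F × I) ℂ} (h : M ≤ N) : ampl Ψ M ≤ ampl Ψ N := by
  rw [Matrix.le_iff, ← ampl_sub]
  exact hΨ.posSemidef_ampl h

end CompletelyPositive

section FinitelyCorrelated

variable {dA dK : ℕ}
  (E : ℕ → Matrix (Fin dK) (Fin dK) ℂ →ₗ[ℂ] Matrix (Fin dA × Fin dK) (Fin dA × Fin dK) ℂ)
  {ρ : Matrix (Fin dK) (Fin dK) ℂ}

theorem posSemidef_fcsTau (hCP : ∀ n, IsCP (E n)) (hρ : ρ.PosSemidef) (n : ℕ) :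
    (fcsTau E ρ n).PosSemidef := by
  induction n with
  | zero => exact ((hCP 0).posSemidef_apply hρ).submatrix _
  | succ n ih => exact ((hCP (n + 1)).posSemidef_ampl ih).submatrix _

theorem ptraceSnd_fcsTau_succ (n : ℕ) :
    ptraceSnd (fcsTau E ρ (n + 1)) =
      reindex (splitLast (Fin dA) (n + 1)).symm (splitLast (Fin dA) (n + 1)).symm
        (ptraceSnd (reindex (Equiv.prodAssoc _ _ _).symm (Equiv.prodAssoc _ _ _).symm
          (ampl (E (n + 1)) (fcsTau E ρ n)))) :=
  rfl

theorem ptraceSnd_fcsTau_succ_le {n : ℕ} (hCP : IsCP (E (n + 1))) {R : ℝ}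
    (h : fcsTau E ρ n ≤ R • (ptraceSnd (fcsTau E ρ n) ⊗ₖ ρ)) :
    ptraceSnd (fcsTau E ρ (n + 1)) ≤
      R • tensorExt (ptraceSnd (fcsTau E ρ n)) (ptraceSnd (E (n + 1) ρ)) := by
  set σ := ptraceSnd (fcsTau E ρ n)
  have hE := hCP.ampl_mono h
  rw [ampl_smul, ampl_kronecker] at hE
  calc ptraceSnd (fcsTau E ρ (n + 1))
      ≤ reindex (splitLast (Fin dA) (n + 1)).symm (splitLast (Fin dA) (n + 1)).symm
          (ptraceSnd (reindex (Equiv.prodAssoc _ _ _).symm (Equiv.prodAssoc _ _ _).symm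
            (R • (σ ⊗ₖ E (n + 1) ρ)))) := by
        rw [ptraceSnd_fcsTau_succ]
        exact reindex_le_reindex _ (ptraceSnd_mono (reindex_le_reindex _ hE))
    _ = R • tensorExt σ (ptraceSnd (E (n + 1) ρ)) := by
        rw [tensorExt, ← ptraceSnd_reindex_prodAssoc_kronecker]
        ext; simp [ptraceSnd, Finset.smul_sum]

end FinitelyCorrelated

/-- `fcsTau E ρ n` is the paper's `τ_{n+1}`, so `ptraceSnd (fcsTau E ρ n)` is `ρ_{n+1}` and
`ptraceSnd (E n ρ)` is `ρ̃_{n+1}`. -/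
theorem finitely_correlated_upper_factorization_general
    {dA dK : ℕ}
    (E : ℕ → Matrix (Fin dK) (Fin dK) ℂ →ₗ[ℂ] Matrix (Fin dA × Fin dK) (Fin dA × Fin dK) ℂ)
    (hCP : ∀ n, IsCP (E n))
    (ρ : Matrix (Fin dK) (Fin dK) ℂ) (hρ : ρ.PosDef) :
    ∃ R : ℝ, 1 < R ∧ ∀ n : ℕ,
      loewnerLE (ptraceSnd (fcsTau E ρ (n + 1)))
        ((R : ℂ) • tensorExt (ptraceSnd (fcsTau E ρ n)) (ptraceSnd (E (n + 1) ρ))) := by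
  obtain ⟨r, hr, hρr⟩ := hρ.exists_pos_smul_one_le
  refine ⟨max (dK / r) 2, lt_max_of_lt_right one_lt_two, fun n => ?_⟩
  have hτ := posSemidef_fcsTau E hCP hρ.posSemidef n
  have hbound : fcsTau E ρ n ≤ max (dK / r) 2 • (ptraceSnd (fcsTau E ρ n) ⊗ₖ ρ) := by
    refine (le_smul_ptraceSnd_kronecker hτ hr hρr).trans ?_
    rw [Fintype.card_fin]
    exact smul_le_smul_of_nonneg_right (le_max_left _ _)
      ((posSemidef_ptraceSnd hτ).kronecker hρ.posSemidef).nonneg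
  rw [Complex.coe_smul]
  exact ptraceSnd_fcsTau_succ_le E (hCP (n + 1)) hbound

/-- **Non-homogeneous finitely correlated states satisfy the upper factorization property
(Proposition 1).** Here `fcsTau E ρ n` is the paper's `τ_{n+1}`, `ptraceSnd (fcsTau E ρ n)`
is `ρ_{n+1}` and `ptraceSnd (E n ρ)` is `ρ̃_{n+1}`; the conclusion is
`ρ_n ≤ R ρ_{n-1} ⊗ ρ̃_n` for some `R > 1` and every `n ≥ 2`. -/
theorem finitely_correlated_upper_factorization
    {dA dK : ℕ}
    (E : ℕ → Matrix (Fin dK) (Fin dK) ℂ →ₗ[ℂ] Matrix (Fin dA × Fin dK) (Fin dA × Fin dK) ℂ)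
    (hCP : ∀ n, IsCP (E n)) (hTP : ∀ n, IsTP (E n))
    (ρ : Matrix (Fin dK) (Fin dK) ℂ) (hρ : ρ.PosDef) (hρtr : ρ.trace = 1)
    (hinv : ∀ n, ptraceFst (E n ρ) = ρ) :
    ∃ R : ℝ, 1 < R ∧ ∀ n : ℕ,
      loewnerLE (ptraceSnd (fcsTau E ρ (n + 1)))
        ((R : ℂ) • tensorExt (ptraceSnd (fcsTau E ρ n)) (ptraceSnd (E (n + 1) ρ))) :=
  finitely_correlated_upper_factorization_general E hCP ρ hρ
end QHT
end
end

section
/- Let B be a star-subalgebra of M_d(ℂ) containing the identity, and let ρ be a faithful state on B, i.e. a positive semidefinite matrix ρ ∈ M_d(ℂ) with Tr[ρ] = 1 such that Tr[ρ b*b] > 0 for every nonzero b ∈ B. Define Φ : B → B by Φ(b) := Tr[ρ b]·I. Then there exists a constant R > 1 such that R·Φ − id_B is completely positive, i.e. for every m ∈ ℕ, the map id_{M_m(ℂ)} ⊗ (R·Φ − id_B) sends every positive semidefinite element of M_m(ℂ) ⊗ M_d(ℂ) lying in M_m(ℂ) ⊗ B to a positive semidefinite matrix. -/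
open Matrix MeasureTheory
open scoped ComplexOrder

noncomputable section

namespace QHT

variable {ι : Type*} [Fintype ι] [DecidableEq ι]

/-!
Faithfulness of `ρ` on `B` upgrades, by compactness of the unit sphere of `B`, to a uniform bound
`c • Tr[s⋆s] ≤ Tr[ρ s⋆s]` for `s ∈ B`; since every positive element of `B` is such an `s⋆s`
(functional calculus stays inside `B`), `b ↦ Tr[(ρ - c) b]` is a positive functional on `B`.
Positive functionals are completely positive, which gives `c • (Tr₂ M ⊗ I) ≤ (id ⊗ Φ) M`. On the
other hand the pinching inequality `M ≤ d • ∑ₐ Pₐ M Pₐ` for the projections `Pₐ = I ⊗ |a⟩⟨a|`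
gives `M ≤ d • (Tr₂ M ⊗ I)`, hence `M ≤ (d / c) • (id ⊗ Φ) M`.
-/

open scoped MatrixOrder Kronecker

section Domination

variable {n : Type*} [Fintype n]

theorem exists_mem_star_mul_self_eq [DecidableEq n] (B : StarSubalgebra ℂ (Matrix n n ℂ))
    {b : Matrix n n ℂ} (hbB : b ∈ B) (hb : 0 ≤ b) : ∃ s ∈ B, star s * s = b := by
  have : IsClosed (B : Set (Matrix n n ℂ)) :=
    Submodule.closed_of_finiteDimensional (Subalgebra.toSubmodule B.toSubalgebra)
  refine ⟨CFC.sqrt b, ?_, ?_⟩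
  · rw [CFC.sqrt_eq_cfc, cfc_nnreal_eq_real _ b]
    exact cfc_mem _ hbB
  · rw [(CFC.sqrt_nonneg b).isSelfAdjoint.star_eq, CFC.sqrt_mul_sqrt_self b hb]

theorem star_smul_mul_smul (t : ℝ) (s : Matrix n n ℂ) :
    star (t • s) * (t • s) = (t ^ 2) • (star s * s) := by
  rw [star_smul, star_trivial, smul_mul_smul_comm, sq]

theorem re_trace_star_mul_self_pos {s : Matrix n n ℂ} (hs : s ≠ 0) :
    0 < (star s * s).trace.re := by
  have hnonneg : 0 ≤ (star s * s).trace := (posSemidef_conjTranspose_mul_self s).trace_nonneg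
  have hne : (star s * s).trace ≠ 0 := by
    rwa [star_eq_conjTranspose, Ne, trace_conjTranspose_mul_self_eq_zero_iff]
  exact (Complex.lt_def.mp (lt_of_le_of_ne hnonneg hne.symm)).1

/- The ratio `Tr[ρ s⋆s] / Tr[s⋆s]` is invariant under real scaling of `s`, so it suffices to
bound it below on the compact unit sphere of `V`. -/
attribute [local instance] Matrix.normedAddCommGroup Matrix.normedSpace in
theorem exists_pos_mul_re_trace_le (V : Submodule ℂ (Matrix n n ℂ)) (ρ : Matrix n n ℂ)
    (hρ : ∀ s ∈ V, s ≠ 0 → 0 < (ρ * (star s * s)).trace.re) :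
    ∃ c : ℝ, 0 < c ∧ ∀ s ∈ V, c * (star s * s).trace.re ≤ (ρ * (star s * s)).trace.re := by
  set ratio : Matrix n n ℂ → ℝ := fun s => (ρ * (star s * s)).trace.re / (star s * s).trace.re
  have ratio_smul (t : ℝ) (ht : t ≠ 0) (s : Matrix n n ℂ) : ratio (t • s) = ratio s := by
    simp only [ratio, star_smul_mul_smul]
    simp only [mul_smul_comm, trace_smul, Complex.real_smul, Complex.re_ofReal_mul]
    exact mul_div_mul_left _ _ (pow_ne_zero 2 ht)
  set K : Set (Matrix n n ℂ) := V ∩ Metric.sphere 0 1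
  have hK : IsCompact K :=
    (isCompact_sphere 0 1).inter_left (Submodule.closed_of_finiteDimensional V)
  have hK0 : ∀ s ∈ K, s ≠ 0 := fun s hs => ne_zero_of_mem_sphere one_ne_zero ⟨s, hs.2⟩
  have hcont : ContinuousOn ratio K :=
    ContinuousOn.div (by fun_prop) (by fun_prop) fun s hs =>
      (re_trace_star_mul_self_pos (hK0 s hs)).ne'
  obtain ⟨c, hc, hcK⟩ := hK.exists_forall_le' hcont (a := 0) fun s hs =>
    div_pos (hρ s hs.1 (hK0 s hs)) (re_trace_star_mul_self_pos (hK0 s hs))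
  refine ⟨c, hc, fun s hs => ?_⟩
  rcases eq_or_ne s 0 with rfl | hs0
  · simp
  have hsK : ‖s‖⁻¹ • s ∈ K := ⟨V.smul_of_tower_mem _ hs, by simp [norm_smul, hs0]⟩
  have hcs := hcK _ hsK
  rw [ratio_smul _ (by simpa using hs0)] at hcs
  exact (le_div_iff₀ (re_trace_star_mul_self_pos hs0)).mp hcs

theorem exists_pos_trace_sub_smul_mul_nonneg [DecidableEq n]
    (B : StarSubalgebra ℂ (Matrix n n ℂ)) {ρ : Matrix n n ℂ} (hρ : 0 ≤ ρ)
    (hfaith : ∀ b ∈ B, b ≠ 0 → 0 < (ρ * (star b * b)).trace.re) :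
    ∃ c : ℝ, 0 < c ∧ ∀ b ∈ B, 0 ≤ b → 0 ≤ ((ρ - c • 1) * b).trace := by
  obtain ⟨c, hc, hcB⟩ :=
    exists_pos_mul_re_trace_le (Subalgebra.toSubmodule B.toSubalgebra) ρ hfaith
  refine ⟨c, hc, fun b hbB hb => ?_⟩
  obtain ⟨s, hsB, rfl⟩ := exists_mem_star_mul_self_eq B hbB hb
  have hρs : 0 ≤ (ρ * (star s * s)).trace := by
    rw [← Matrix.mul_assoc, trace_mul_cycle]
    exact (star_right_conjugate_nonneg hρ s).posSemidef.trace_nonneg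
  have hs : 0 ≤ (star s * s).trace := (star_mul_self_nonneg s).posSemidef.trace_nonneg
  rw [sub_mul, smul_mul_assoc, Matrix.one_mul, trace_sub, trace_smul, sub_nonneg,
    Complex.le_def]
  exact ⟨by simpa using hcB s hsB, by simp [← Complex.nonneg_iff.mp hρs |>.2,
    ← Complex.nonneg_iff.mp hs |>.2]⟩

end Domination

theorem le_card_smul_sum_mul_mul {I κ : Type*} [Fintype I] [Fintype κ] [DecidableEq κ]
    {P : I → Matrix κ κ ℂ} (hP : ∀ i, IsSelfAdjoint (P i)) (hP1 : ∑ i, P i = 1)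
    {M : Matrix κ κ ℂ} (hM : 0 ≤ M) :
    M ≤ Fintype.card I • ∑ i, P i * M * P i := by
  have hcross : ∑ i, ∑ j, P i * M * P j = M := by
    simp only [← Finset.mul_sum, ← Finset.sum_mul, hP1, Matrix.one_mul, Matrix.mul_one]
  have hsq : ∑ i, ∑ j, (P i - P j) * M * (P i - P j) =
      2 • (Fintype.card I • ∑ i, P i * M * P i - M) := by
    simp only [sub_mul, mul_sub, Finset.sum_sub_distrib, hcross]
    rw [Finset.sum_comm (f := fun i j => P j * M * P i), hcross]
    simp only [Finset.sum_const, Finset.card_univ, ← Finset.smul_sum]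
    abel
  have hnonneg : 0 ≤ ∑ i, ∑ j, (P i - P j) * M * (P i - P j) :=
    Finset.sum_nonneg fun i _ => Finset.sum_nonneg fun j _ => by
      simpa [((hP i).sub (hP j)).star_eq] using star_left_conjugate_nonneg hM (P i - P j)
  rw [hsq, ← Nat.cast_smul_eq_nsmul ℝ, smul_nonneg_iff_nonneg_of_pos_left (by norm_num)]
    at hnonneg
  exact sub_nonneg.mp hnonneg

section Amplification

variable {n F : Type*} [Fintype n] [Fintype F]

theorem ampl_smul_sub_self (r : ℂ) (Ψ : Matrix n n ℂ → Matrix n n ℂ)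
    (M : Matrix (F × n) (F × n) ℂ) :
    ampl (fun b => r • Ψ b - b) M = r • ampl Ψ M - M := by
  ext p q
  rfl

variable [DecidableEq n]

theorem ampl_trace_smul_one_eq_sum [DecidableEq F] (M : Matrix (F × n) (F × n) ℂ) :
    ampl (fun b => b.trace • (1 : Matrix n n ℂ)) M =
      ∑ a, ∑ c, star ((1 : Matrix F F ℂ) ⊗ₖ single c a 1) * M *
        ((1 : Matrix F F ℂ) ⊗ₖ single c a 1) := by
  ext ⟨p, b⟩ ⟨q, b'⟩
  simp [ampl, mul_apply, Matrix.sum_apply, Fintype.sum_prod_type, single_apply, one_apply, trace,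
    ite_and, apply_ite (starRingEnd ℂ), Finset.sum_ite_eq, Finset.sum_ite_eq', ite_mul, mul_ite,
    @eq_comm _ b']

theorem ampl_trace_smul_one_nonneg {M : Matrix (F × n) (F × n) ℂ} (hM : 0 ≤ M) :
    0 ≤ ampl (fun b => b.trace • (1 : Matrix n n ℂ)) M := by
  classical
  rw [ampl_trace_smul_one_eq_sum]
  exact Finset.sum_nonneg fun a _ => Finset.sum_nonneg fun c _ =>
    star_left_conjugate_nonneg hM _

theorem le_card_smul_ampl_trace_smul_one {M : Matrix (F × n) (F × n) ℂ} (hM : 0 ≤ M) :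
    M ≤ Fintype.card n • ampl (fun b => b.trace • (1 : Matrix n n ℂ)) M := by
  classical
  let S : n → n → Matrix (F × n) (F × n) ℂ := fun a c => (1 : Matrix F F ℂ) ⊗ₖ single c a 1
  have hS : ∀ a, IsSelfAdjoint (S a a) := fun a => by
    simp [S, IsSelfAdjoint, star_eq_conjTranspose, conjTranspose_kronecker]
  have hS1 : ∑ a, S a a = 1 := by
    ext ⟨p, b⟩ ⟨q, b'⟩
    simp only [S, Matrix.sum_apply, kroneckerMap_apply, one_apply, single_apply, ite_and, mul_ite,
      mul_one, mul_zero, Finset.sum_ite_eq', Finset.mem_univ, if_true, Prod.mk.injEq]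
    split_ifs <;> simp_all
  calc M ≤ Fintype.card n • ∑ a, S a a * M * S a a := le_card_smul_sum_mul_mul hS hS1 hM
    _ ≤ Fintype.card n • ∑ a, ∑ c, star (S a c) * M * S a c := by
      refine nsmul_le_nsmul_right (Finset.sum_le_sum fun a _ => ?_) _
      simpa only [(hS a).star_eq] using Finset.single_le_sum (f := fun c => star (S a c) * M * S a c)
        (fun c _ => star_left_conjugate_nonneg hM _) (Finset.mem_univ a)
    _ = Fintype.card n • ampl (fun b => b.trace • (1 : Matrix n n ℂ)) M := by
      rw [ampl_trace_smul_one_eq_sum]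

theorem ampl_trace_mul_smul_one_eq_kronecker (σ : Matrix n n ℂ) (M : Matrix (F × n) (F × n) ℂ) :
    ampl (fun b => (σ * b).trace • (1 : Matrix n n ℂ)) M =
      (of fun p q => (σ * of fun a b => M (p, a) (q, b)).trace) ⊗ₖ 1 := by
  ext ⟨p, a⟩ ⟨q, b⟩
  simp [ampl, one_apply]

theorem ampl_trace_mul_smul_one_nonneg (V : Submodule ℂ (Matrix n n ℂ)) {σ : Matrix n n ℂ}
    (hσ : σ.IsHermitian) (hσV : ∀ b ∈ V, 0 ≤ b → 0 ≤ (σ * b).trace)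
    {M : Matrix (F × n) (F × n) ℂ} (hM : 0 ≤ M)
    (hMV : ∀ p q, (of fun a b => M (p, a) (q, b)) ∈ V) :
    0 ≤ ampl (fun b => (σ * b).trace • (1 : Matrix n n ℂ)) M := by
  rw [ampl_trace_mul_smul_one_eq_kronecker]
  refine (PosSemidef.kronecker (.of_dotProduct_mulVec_nonneg ?_ fun z => ?_) .one).nonneg
  · ext p q
    simp only [conjTranspose_apply, of_apply, ← trace_conjTranspose, conjTranspose_mul, hσ.eq,
      trace_mul_comm σ]
    congr 2
    ext a b
    rw [conjTranspose_apply, of_apply, of_apply]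
    exact hM.posSemidef.isHermitian.apply (p, a) (q, b)
  · let W : Matrix (F × n) n ℂ := of fun u b => z u.1 * (1 : Matrix n n ℂ) u.2 b
    have hW : Wᴴ * M * W = ∑ p, ∑ q, (star (z p) * z q) • of fun a b => M (p, a) (q, b) := by
      ext a b
      simp only [W, one_apply, mul_ite, mul_one, mul_zero, mul_apply, conjTranspose_apply,
        of_apply, RCLike.star_def, apply_ite (starRingEnd ℂ), map_zero, ite_mul, zero_mul,
        Fintype.sum_prod_type, Finset.sum_ite_eq', Finset.mem_univ, if_true, Finset.sum_mul,
        smul_of, Matrix.sum_apply, Pi.smul_apply, smul_eq_mul]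
      rw [Finset.sum_comm]
      exact Finset.sum_congr rfl fun p _ => Finset.sum_congr rfl fun q _ => by ring
    have hquad : star z ⬝ᵥ (of (fun p q => (σ * of fun a b => M (p, a) (q, b)).trace) *ᵥ z) =
        (σ * (Wᴴ * M * W)).trace := by
      simp only [hW, dotProduct, mulVec, Finset.mul_sum, trace_sum, mul_smul_comm, trace_smul,
        smul_eq_mul, of_apply, Pi.star_apply]
      exact Finset.sum_congr rfl fun p _ => Finset.sum_congr rfl fun q _ => by ring
    rw [hquad]
    refine hσV _ ?_ (hM.posSemidef.conjTranspose_mul_mul_same W).nonneg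
    rw [hW]
    exact sum_mem fun p _ => sum_mem fun q _ => V.smul_mem _ (hMV p q)

theorem smul_ampl_trace_smul_one_le (V : Submodule ℂ (Matrix n n ℂ)) {ρ : Matrix n n ℂ}
    (hρ : ρ.IsHermitian) {c : ℝ} (hc : ∀ b ∈ V, 0 ≤ b → 0 ≤ ((ρ - c • 1) * b).trace)
    {M : Matrix (F × n) (F × n) ℂ} (hM : 0 ≤ M)
    (hMV : ∀ p q, (of fun a b => M (p, a) (q, b)) ∈ V) :
    c • ampl (fun b => b.trace • (1 : Matrix n n ℂ)) M ≤
      ampl (fun b => (ρ * b).trace • (1 : Matrix n n ℂ)) M := by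
  have h := ampl_trace_mul_smul_one_nonneg V (hρ.sub (isHermitian_one.smul (IsSelfAdjoint.all c))) hc hM hMV
  rw [← sub_nonneg]
  convert h using 1
  ext p q
  simp only [ampl, Matrix.sub_apply, Matrix.smul_apply, of_apply, sub_mul, smul_mul_assoc,
    Matrix.one_mul, trace_sub, trace_smul, smul_eq_mul]

end Amplification

theorem exists_R_cp_of_faithful_state_general
    {d : ℕ} (B : StarSubalgebra ℂ (Matrix (Fin d) (Fin d) ℂ))
    (ρ : Matrix (Fin d) (Fin d) ℂ) (hρ : ρ.PosSemidef)
    (hfaith : ∀ b ∈ B, b ≠ 0 → 0 < ((ρ * (star b * b)).trace).re) :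
    ∃ R : ℝ, 1 < R ∧ ∀ (m : ℕ) (M : Matrix (Fin m × Fin d) (Fin m × Fin d) ℂ),
      M.PosSemidef →
      (∀ p q : Fin m, (Matrix.of fun a b => M (p, a) (q, b)) ∈ B) →
      (ampl (fun b => (R : ℂ) • (((ρ * b).trace) • (1 : Matrix (Fin d) (Fin d) ℂ)) - b)
        M).PosSemidef := by
  obtain ⟨c, hc, hρc⟩ := exists_pos_trace_sub_smul_mul_nonneg B hρ.nonneg hfaith
  refine ⟨d / c + 2, lt_add_of_nonneg_of_lt (by positivity) one_lt_two, fun m M hM hMB => ?_⟩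
  set T := ampl (fun b => b.trace • (1 : Matrix (Fin d) (Fin d) ℂ)) M
  set Φ := ampl (fun b => (ρ * b).trace • (1 : Matrix (Fin d) (Fin d) ℂ)) M
  have hMT : M ≤ (d : ℝ) • T := by
    simpa [Nat.cast_smul_eq_nsmul] using le_card_smul_ampl_trace_smul_one hM.nonneg
  have hcT : c • T ≤ Φ :=
    smul_ampl_trace_smul_one_le (Subalgebra.toSubmodule B.toSubalgebra) hρ.1 hρc hM.nonneg hMB
  have hΦ : 0 ≤ Φ := (smul_nonneg hc.le (ampl_trace_smul_one_nonneg hM.nonneg)).trans hcT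
  rw [ampl_smul_sub_self, ← nonneg_iff_posSemidef, sub_nonneg, Complex.coe_smul]
  calc M ≤ (d : ℝ) • T := hMT
    _ = (d / c) • (c • T) := by rw [smul_smul, div_mul_cancel₀ _ hc.ne']
    _ ≤ (d / c) • Φ := smul_le_smul_of_nonneg_left hcT (by positivity)
    _ ≤ (d / c + 2) • Φ := smul_le_smul_of_nonneg_right (by linarith) hΦ

/-- **Lemma 2 (Hiai–Mosonyi–Ogawa).** Let `B` be a star-subalgebra of `M_d(ℂ)` and `ρ` a
faithful state on `B`; let `Φ(b) = Tr[ρ b]·I`. Then there is `R > 1` such that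
`R Φ - id_B` is completely positive. -/
theorem exists_R_cp_of_faithful_state
    {d : ℕ} (B : StarSubalgebra ℂ (Matrix (Fin d) (Fin d) ℂ))
    (ρ : Matrix (Fin d) (Fin d) ℂ) (hρ : ρ.PosSemidef) (hρtr : ρ.trace = 1)
    (hfaith : ∀ b ∈ B, b ≠ 0 → 0 < ((ρ * (star b * b)).trace).re) :
    ∃ R : ℝ, 1 < R ∧ ∀ (m : ℕ) (M : Matrix (Fin m × Fin d) (Fin m × Fin d) ℂ),
      M.PosSemidef →
      (∀ p q : Fin m, (Matrix.of fun a b => M (p, a) (q, b)) ∈ B) →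
      (ampl (fun b => (R : ℂ) • (((ρ * b).trace) • (1 : Matrix (Fin d) (Fin d) ℂ)) - b)
        M).PosSemidef :=
  exists_R_cp_of_faithful_state_general B ρ hρ hfaith

end QHT
end
end

section
/- Let ρ and σ be faithful states on a finite-dimensional complex Hilbert space H. For any L > 0 there exists a test T with 0 ≤ T ≤ I such that Tr[ρ(I−T)] ≤ μ_{σ|ρ}([−log L, ∞)) and Tr[σ T] ≤ L^{−1}, where μ_{σ|ρ}([−log L, ∞)) = Σ Tr[P_μ(σ) ρ^{1/2} P_λ(ρ) ρ^{1/2}], the sum running over eigenvalues λ of ρ and μ of σ with log μ − log λ ≥ −log L. -/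
open Matrix MeasureTheory
open scoped ComplexOrder

noncomputable section

/-!
Write each eigenvector `x i` of `ρ` (eigenvalue `λ i`) in the eigenbasis `y j` of `σ`
(eigenvalues `μ j`) and split it as `v i + w i`, where `v i` keeps the components with
`μ j < λ i / L`. Gram–Schmidt applied to the `v i` in order of increasing `λ i` produces an
orthonormal family whose `k`-th vector still lies in the span of the `y j` with `μ j ≤ λ k / L`.
The projection `T` onto its span fixes every `v i`, so `Tr[ρ(I - T)] ≤ ∑ λ i ‖w i‖²`, which is
exactly the spectral mass of `[-log L, ∞)`; and each vector of the family contributes at most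
`λ k / L` to `Tr[σ T]`, where `∑ λ k = 1`.
-/

open scoped InnerProductSpace

lemma EuclideanSpace.star_dotProduct_eq_inner {𝕜 n : Type*} [RCLike 𝕜] [Fintype n]
    (x y : EuclideanSpace 𝕜 n) : star ⇑x ⬝ᵥ ⇑y = ⟪x, y⟫_𝕜 :=
  dotProduct_comm _ _

namespace OrthonormalBasis

variable {𝕜 n E : Type*} [RCLike 𝕜] [Fintype n] [NormedAddCommGroup E] [InnerProductSpace 𝕜 E]
  (b : OrthonormalBasis n 𝕜 E)

lemma sum_filter_add_sum_filter_not_inner_smul (p : n → Prop) [DecidablePred p] (x : E) :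
    (∑ j with p j, ⟪b j, x⟫_𝕜 • b j) + ∑ j with ¬ p j, ⟪b j, x⟫_𝕜 • b j = x := by
  rw [Finset.sum_filter_add_sum_filter_not, b.sum_repr']

lemma norm_sum_inner_smul_sq (s : Finset n) (x : E) :
    ‖∑ j ∈ s, ⟪b j, x⟫_𝕜 • b j‖ ^ 2 = ∑ j ∈ s, ‖⟪b j, x⟫_𝕜‖ ^ 2 := by
  rw [@norm_sq_eq_re_inner 𝕜, b.orthonormal.inner_sum, map_sum]
  refine Finset.sum_congr rfl fun j _ => ?_
  rw [RCLike.conj_mul]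
  exact_mod_cast RCLike.ofReal_re (K := 𝕜) _

lemma sum_inner_smul_mem_span (s : Finset n) (x : E) :
    ∑ j ∈ s, ⟪b j, x⟫_𝕜 • b j ∈ Submodule.span 𝕜 (b '' s) :=
  Submodule.sum_mem _ fun j hj => Submodule.smul_mem _ _ (Submodule.subset_span ⟨j, hj, rfl⟩)

end OrthonormalBasis

lemma exists_equiv_fin_monotone {ι α : Type*} [Fintype ι] [LinearOrder α] (g : ι → α) :
    ∃ (m : ℕ) (e : Fin m ≃ ι), Monotone (g ∘ e) :=
  ⟨Fintype.card ι, (Tuple.sort (g ∘ (Fintype.equivFin ι).symm)).trans (Fintype.equivFin ι).symm,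
    by rw [Equiv.coe_trans, ← Function.comp_assoc]; exact Tuple.monotone_sort _⟩

lemma InnerProductSpace.gramSchmidtNormed_mem_of_monotone {𝕜 E ι : Type*} [RCLike 𝕜]
    [NormedAddCommGroup E] [InnerProductSpace 𝕜 E] [LinearOrder ι] [LocallyFiniteOrderBot ι]
    [WellFoundedLT ι] {f : ι → E} {W : ι → Submodule 𝕜 E} (hW : Monotone W)
    (hf : ∀ k, f k ∈ W k) (k : ι) : gramSchmidtNormed 𝕜 f k ∈ W k := by
  have hspan : Submodule.span 𝕜 (f '' Set.Iic k) ≤ W k :=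
    Submodule.span_le.mpr (Set.image_subset_iff.mpr fun _ hm => hW hm (hf _))
  exact Submodule.smul_mem _ _ (hspan (gramSchmidt_mem_span 𝕜 f le_rfl))

lemma InnerProductSpace.span_range_gramSchmidtNormed_ne_zero {𝕜 E ι : Type*} [RCLike 𝕜]
    [NormedAddCommGroup E] [InnerProductSpace 𝕜 E] [LinearOrder ι] [LocallyFiniteOrderBot ι]
    [WellFoundedLT ι] (f : ι → E) :
    Submodule.span 𝕜
        (Set.range fun k : {k | gramSchmidtNormed 𝕜 f k ≠ 0} => gramSchmidtNormed 𝕜 f k) =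
      Submodule.span 𝕜 (Set.range f) := by
  have hrange :
      (Set.range fun k : {k | gramSchmidtNormed 𝕜 f k ≠ 0} => gramSchmidtNormed 𝕜 f k) =
        Set.range (gramSchmidtNormed 𝕜 f) \ {0} := by
    ext; aesop
  rw [hrange, Submodule.span_sdiff_singleton_zero, span_gramSchmidtNormed_range, span_gramSchmidt]

section SpanProjection

variable {n κ : Type*} [Fintype κ]

def spanProj (b : κ → EuclideanSpace ℂ n) : Matrix n n ℂ :=
  ∑ k, vecMulVec ⇑(b k) (star ⇑(b k))

lemma isHermitian_spanProj (b : κ → EuclideanSpace ℂ n) : (spanProj b).IsHermitian := by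
  simp [spanProj, Matrix.IsHermitian, Matrix.conjTranspose_sum, Matrix.conjTranspose_vecMulVec]

lemma trace_mul_spanProj [Fintype n] (A : Matrix n n ℂ) (b : κ → EuclideanSpace ℂ n) :
    (A * spanProj b).trace = ∑ k, star ⇑(b k) ⬝ᵥ (A *ᵥ b k) := by
  simp only [spanProj, Matrix.mul_sum, Matrix.trace_sum, Matrix.mul_vecMulVec,
    Matrix.trace_vecMulVec, dotProduct_comm (A *ᵥ _)]

variable [Fintype n] {b : κ → EuclideanSpace ℂ n}

lemma Orthonormal.spanProj_mulVec (hb : Orthonormal ℂ b) (k : κ) :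
    spanProj b *ᵥ b k = b k := by
  classical
  simp [spanProj, Matrix.sum_mulVec, Matrix.vecMulVec_mulVec,
    EuclideanSpace.star_dotProduct_eq_inner, orthonormal_iff_ite.mp hb]

lemma Orthonormal.spanProj_mul_self (hb : Orthonormal ℂ b) :
    spanProj b * spanProj b = spanProj b := by
  conv_lhs => enter [2]; rw [spanProj]
  simp only [Matrix.mul_sum, Matrix.mul_vecMulVec, hb.spanProj_mulVec]
  rfl

lemma Orthonormal.spanProj_mulVec_of_mem_span (hb : Orthonormal ℂ b) {z : EuclideanSpace ℂ n}
    (hz : z ∈ Submodule.span ℂ (Set.range b)) : spanProj b *ᵥ z = z := by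
  induction hz using Submodule.span_induction with
  | mem x hx => obtain ⟨k, rfl⟩ := hx; exact hb.spanProj_mulVec k
  | zero => exact Matrix.mulVec_zero _
  | add x y _ _ hx hy => simp only [WithLp.ofLp_add, Matrix.mulVec_add, hx, hy]
  | smul c x _ hx => simp only [WithLp.ofLp_smul, Matrix.mulVec_smul, hx]

end SpanProjection

lemma OrthonormalBasis.spanProj_eq_one {n : Type*} [Fintype n] [DecidableEq n]
    (b : OrthonormalBasis n ℂ (EuclideanSpace ℂ n)) : spanProj ⇑b = 1 := by
  refine Matrix.ext_iff_mulVec.mpr fun z => ?_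
  rw [Matrix.one_mulVec]
  exact b.orthonormal.spanProj_mulVec_of_mem_span (z := WithLp.toLp 2 z)
    (by rw [← b.coe_toBasis, b.toBasis.span_eq]; trivial)

namespace Matrix.IsHermitian

variable {n : Type*} [Fintype n] [DecidableEq n] {A : Matrix n n ℂ} (hA : A.IsHermitian)

lemma trace_mul_eq_sum (S : Matrix n n ℂ) :
    (A * S).trace = ∑ i, (hA.eigenvalues i : ℂ) *
      (star ⇑(hA.eigenvectorBasis i) ⬝ᵥ (S *ᵥ hA.eigenvectorBasis i)) := by
  rw [Matrix.trace_mul_comm, ← Matrix.mul_one (S * A), ← hA.eigenvectorBasis.spanProj_eq_one,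
    trace_mul_spanProj]
  refine Finset.sum_congr rfl fun i _ => ?_
  rw [← Matrix.mulVec_mulVec, hA.mulVec_eigenvectorBasis, Matrix.mulVec_smul, dotProduct_smul,
    Complex.real_smul]

lemma sum_eigenvalues_eq_re_trace : ∑ i, hA.eigenvalues i = A.trace.re := by
  simp [hA.trace_eq_sum_eigenvalues]

lemma star_dotProduct_mulVec_eq_sum (z : EuclideanSpace ℂ n) :
    star ⇑z ⬝ᵥ (A *ᵥ z) =
      ∑ i, (hA.eigenvalues i : ℂ) * (‖⟪hA.eigenvectorBasis i, z⟫_ℂ‖ ^ 2 : ℝ) := by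
  have h := hA.trace_mul_eq_sum (vecMulVec z (star ⇑z))
  rw [Matrix.mul_vecMulVec, Matrix.trace_vecMulVec, dotProduct_comm] at h
  rw [h]
  refine Finset.sum_congr rfl fun i _ => ?_
  rw [Matrix.vecMulVec_mulVec, dotProduct_smul, op_smul_eq_mul,
    EuclideanSpace.star_dotProduct_eq_inner, EuclideanSpace.star_dotProduct_eq_inner,
    ← inner_conj_symm z, Complex.mul_conj, Complex.normSq_eq_norm_sq]

lemma re_star_dotProduct_mulVec_le {t : ℝ} {z : EuclideanSpace ℂ n}
    (hz : z ∈ Submodule.span ℂ (hA.eigenvectorBasis '' {i | hA.eigenvalues i ≤ t})) :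
    (star ⇑z ⬝ᵥ (A *ᵥ z)).re ≤ t * ‖z‖ ^ 2 := by
  have hzero : ∀ i, t < hA.eigenvalues i → ⟪hA.eigenvectorBasis i, z⟫_ℂ = 0 := by
    intro i hi
    refine Submodule.mem_orthogonal_singleton_iff_inner_right.mp (Submodule.span_le.mpr ?_ hz)
    rintro _ ⟨j, hj, rfl⟩
    refine Submodule.mem_orthogonal_singleton_iff_inner_right.mpr ?_
    exact hA.eigenvectorBasis.orthonormal.inner_eq_zero (by rintro rfl; exact hi.not_ge hj)
  rw [hA.star_dotProduct_mulVec_eq_sum, ← hA.eigenvectorBasis.sum_sq_norm_inner_right,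
    Finset.mul_sum, Complex.re_sum]
  refine Finset.sum_le_sum fun i _ => ?_
  rw [← Complex.ofReal_mul, Complex.ofReal_re]
  rcases le_or_gt (hA.eigenvalues i) t with h | h
  · exact mul_le_mul_of_nonneg_right h (sq_nonneg _)
  · simp [hzero i h]

end Matrix.IsHermitian

namespace QHT

variable {n : Type*} [Fintype n] [DecidableEq n] {A : Matrix n n ℂ}

lemma isHermitian_matFun (f : ℝ → ℝ) : (matFun f A).IsHermitian := by
  unfold matFun
  split_ifs with hA
  · rw [Matrix.star_eq_conjTranspose]
    exact Matrix.isHermitian_mul_mul_conjTranspose _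
      (Matrix.isHermitian_diagonal_of_self_adjoint _ (by ext; simp))
  · exact Matrix.isHermitian_zero

lemma matFun_mulVec_eigenvectorBasis (hA : A.IsHermitian) (f : ℝ → ℝ) (i : n) :
    matFun f A *ᵥ hA.eigenvectorBasis i =
      (f (hA.eigenvalues i) : ℂ) • ⇑(hA.eigenvectorBasis i) := by
  rw [matFun, dif_pos hA, ← Matrix.mulVec_mulVec, ← Matrix.mulVec_mulVec,
    Matrix.IsHermitian.star_eigenvectorUnitary_mulVec, Matrix.diagonal_mulVec_single]
  ext; simp [mul_comm]

lemma eigProj_eq_vecMulVec (hA : A.IsHermitian) (i : n) :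
    eigProj hA i = vecMulVec ⇑(hA.eigenvectorBasis i) (star ⇑(hA.eigenvectorBasis i)) := by
  ext; simp [eigProj, Matrix.vecMulVec_apply]

lemma matFun_mul_eigProj_mul_matFun (hA : A.IsHermitian) (f g : ℝ → ℝ) (i : n) :
    matFun f A * eigProj hA i * matFun g A =
      ((f (hA.eigenvalues i) * g (hA.eigenvalues i) : ℝ) : ℂ) • eigProj hA i := by
  rw [eigProj_eq_vecMulVec, Matrix.mul_vecMulVec, Matrix.vecMulVec_mul,
    ← (isHermitian_matFun g).eq, ← Matrix.star_mulVec, matFun_mulVec_eigenvectorBasis,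
    matFun_mulVec_eigenvectorBasis]
  simp only [star_smul, Complex.star_def, Complex.conj_ofReal, Matrix.vecMulVec_smul,
    Matrix.smul_vecMulVec, smul_smul, Complex.ofReal_mul, mul_comm]

lemma trace_eigProj_mul_eigProj {B : Matrix n n ℂ} (hA : A.IsHermitian) (hB : B.IsHermitian)
    (i j : n) :
    (eigProj hB j * eigProj hA i).trace =
      (‖⟪hB.eigenvectorBasis j, hA.eigenvectorBasis i⟫_ℂ‖ ^ 2 : ℝ) := by
  rw [eigProj_eq_vecMulVec hA, Matrix.mul_vecMulVec, Matrix.trace_vecMulVec,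
    eigProj_eq_vecMulVec hB, Matrix.vecMulVec_mulVec, smul_dotProduct, op_smul_eq_mul,
    dotProduct_comm, EuclideanSpace.star_dotProduct_eq_inner,
    EuclideanSpace.star_dotProduct_eq_inner, ← inner_conj_symm (hA.eigenvectorBasis i),
    Complex.conj_mul']
  norm_cast

lemma log_sub_log_mem_Ici_neg_log_iff {lam mu L : ℝ} (hlam : 0 < lam) (hmu : 0 < mu)
    (hL : 0 < L) : Real.log mu - Real.log lam ∈ Set.Ici (-Real.log L) ↔ lam / L ≤ mu := by
  rw [Set.mem_Ici, ← Real.log_le_log_iff (by positivity) hmu, Real.log_div hlam.ne' hL.ne']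
  constructor <;> intro <;> linarith

lemma specMassSet_Ici_neg_log {ρ σ : Matrix n n ℂ} (hρ : ρ.PosDef) (hσ : σ.PosDef) {L : ℝ}
    (hL : 0 < L) :
    specMassSet ρ σ (Set.Ici (-Real.log L)) =
      ∑ i, hρ.1.eigenvalues i * ∑ j with hρ.1.eigenvalues i / L ≤ hσ.1.eigenvalues j,
        ‖⟪hσ.1.eigenvectorBasis j, hρ.1.eigenvectorBasis i⟫_ℂ‖ ^ 2 := by
  rw [specMassSet, dif_pos ⟨hρ.1, hσ.1⟩]
  refine Finset.sum_congr rfl fun i _ => ?_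
  rw [Finset.sum_filter, Finset.mul_sum]
  refine Finset.sum_congr rfl fun j _ => ?_
  rw [log_sub_log_mem_Ici_neg_log_iff (hρ.eigenvalues_pos i) (hσ.eigenvalues_pos j) hL]
  split_ifs
  · simp only [Matrix.mul_assoc]
    rw [← Matrix.mul_assoc (matSqrt ρ), matSqrt, matFun_mul_eigProj_mul_matFun, Matrix.mul_smul,
      Matrix.trace_smul, trace_eigProj_mul_eigProj, smul_eq_mul, ← Complex.ofReal_mul,
      Complex.ofReal_re, Real.mul_self_sqrt (hρ.eigenvalues_pos i).le]
  · rw [mul_zero]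

lemma isTest_of_isHermitian_of_mul_self {T : Matrix n n ℂ} (hT : T.IsHermitian)
    (hTT : T * T = T) : IsTest T := by
  have hT' : (1 - T).IsHermitian := isHermitian_one.sub hT
  have hTT' : (1 - T) * (1 - T) = 1 - T := by
    rw [sub_mul, mul_sub, mul_sub, hTT, one_mul, mul_one, one_mul, sub_self, sub_zero]
  constructor
  · have h := Matrix.posSemidef_conjTranspose_mul_self T
    rwa [hT.eq, hTT] at h
  · have h := Matrix.posSemidef_conjTranspose_mul_self (1 - T)
    rwa [hT'.eq, hTT'] at h

lemma isTest_spanProj {κ : Type*} [Fintype κ] {b : κ → EuclideanSpace ℂ n}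
    (hb : Orthonormal ℂ b) : IsTest (spanProj b) :=
  isTest_of_isHermitian_of_mul_self (isHermitian_spanProj b) hb.spanProj_mul_self

lemma re_star_dotProduct_one_sub_mulVec_le {T : Matrix n n ℂ} (hT : IsTest T) {v : n → ℂ}
    (hv : T *ᵥ v = v) (w : n → ℂ) :
    (star (v + w) ⬝ᵥ ((1 - T) *ᵥ (v + w))).re ≤ (star w ⬝ᵥ w).re := by
  have hv0 : (1 - T) *ᵥ v = 0 := by rw [Matrix.sub_mulVec, Matrix.one_mulVec, hv, sub_self]
  have hcross : star v ⬝ᵥ ((1 - T) *ᵥ w) = 0 := by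
    rw [Matrix.dotProduct_mulVec, ← hT.2.1.eq, ← Matrix.star_mulVec, hv0, star_zero,
      zero_dotProduct]
  have hTw : 0 ≤ (star w ⬝ᵥ (T *ᵥ w)).re := hT.1.re_dotProduct_nonneg w
  rw [Matrix.mulVec_add, hv0, zero_add, star_add, add_dotProduct, hcross, zero_add,
    Matrix.sub_mulVec, Matrix.one_mulVec, dotProduct_sub, Complex.sub_re]
  linarith

lemma typeI_le_sum_eigenvalues_mul_norm_sq {ρ T : Matrix n n ℂ} (hρ : ρ.IsHermitian)
    (hρ0 : ∀ i, 0 ≤ hρ.eigenvalues i) (hT : IsTest T) {v w : n → EuclideanSpace ℂ n}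
    (hvw : ∀ i, v i + w i = hρ.eigenvectorBasis i) (hv : ∀ i, T *ᵥ v i = v i) :
    typeI ρ T ≤ ∑ i, hρ.eigenvalues i * ‖w i‖ ^ 2 := by
  rw [typeI, hρ.trace_mul_eq_sum, Complex.re_sum]
  refine Finset.sum_le_sum fun i _ => ?_
  rw [Complex.re_ofReal_mul, ← hvw i, WithLp.ofLp_add]
  refine mul_le_mul_of_nonneg_left ?_ (hρ0 i)
  refine (re_star_dotProduct_one_sub_mulVec_le hT (hv i) (w i)).trans_eq ?_
  rw [EuclideanSpace.star_dotProduct_eq_inner, inner_self_eq_norm_sq_to_K]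
  norm_cast

lemma typeII_spanProj_le {σ : Matrix n n ℂ} (hσ : σ.IsHermitian) {κ : Type*} [Fintype κ]
    {b : κ → EuclideanSpace ℂ n} (hb : Orthonormal ℂ b) (s : κ → ℝ)
    (hbs : ∀ k, b k ∈ Submodule.span ℂ
      (hσ.eigenvectorBasis '' {j | hσ.eigenvalues j ≤ s k})) :
    typeII σ (spanProj b) ≤ ∑ k, s k := by
  rw [typeII, trace_mul_spanProj, Complex.re_sum]
  refine Finset.sum_le_sum fun k _ => ?_
  simpa [hb.norm_eq_one] using hσ.re_star_dotProduct_mulVec_le (hbs k)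

lemma exists_isTest_fixing_typeII_le {κ : Type*} [Fintype κ] {σ : Matrix n n ℂ}
    (hσ : σ.IsHermitian) {v : κ → EuclideanSpace ℂ n} {t : κ → ℝ} (ht : ∀ i, 0 ≤ t i)
    (hv : ∀ i, v i ∈ Submodule.span ℂ (hσ.eigenvectorBasis '' {j | hσ.eigenvalues j ≤ t i})) :
    ∃ T : Matrix n n ℂ, IsTest T ∧ (∀ i, T *ᵥ v i = v i) ∧ typeII σ T ≤ ∑ i, t i := by
  classical
  obtain ⟨m, e, he⟩ := exists_equiv_fin_monotone t
  set u := InnerProductSpace.gramSchmidtNormed ℂ (v ∘ e)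
  have hb : Orthonormal ℂ (fun k : {k | u k ≠ 0} => u k) :=
    InnerProductSpace.gramSchmidtNormed_orthonormal' _
  have hu : ∀ k, u k ∈ Submodule.span ℂ
      (hσ.eigenvectorBasis '' {j | hσ.eigenvalues j ≤ t (e k)}) :=
    InnerProductSpace.gramSchmidtNormed_mem_of_monotone
      (fun k k' h => Submodule.span_mono (Set.image_mono fun j hj => le_trans hj (he h)))
      (fun k => hv (e k))
  refine ⟨spanProj _, isTest_spanProj hb, fun i => hb.spanProj_mulVec_of_mem_span ?_, ?_⟩
  · rw [InnerProductSpace.span_range_gramSchmidtNormed_ne_zero]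
    exact Submodule.subset_span ⟨e.symm i, by simp⟩
  · calc typeII σ _ ≤ ∑ k : {k | u k ≠ 0}, t (e k) :=
          typeII_spanProj_le hσ hb _ fun k => hu k
      _ ≤ ∑ k, t (e k) := by
        rw [← Fintype.sum_subtype_add_sum_subtype (fun k => u k ≠ 0)]
        exact le_add_of_nonneg_right (Finset.sum_nonneg fun k _ => ht _)
      _ = ∑ i, t i := e.sum_comp t

/-- **Proposition 1 (Li / Datta–Pautrat–Rouzé).** For faithful states `ρ`, `σ` and any `L > 0`
there exists a test `T` with `Tr[ρ(I-T)] ≤ μ_{σ|ρ}([-log L, ∞))` and `Tr[σ T] ≤ L⁻¹`. -/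
theorem exists_test_spectral_bound
    {ι : Type*} [Fintype ι] [DecidableEq ι] (ρ σ : Matrix ι ι ℂ)
    (hρ : IsFaithfulState ρ) (hσ : IsFaithfulState σ) (L : ℝ) (hL : 0 < L) :
    ∃ T : Matrix ι ι ℂ, IsTest T ∧
      typeI ρ T ≤ specMassSet ρ σ (Set.Ici (-Real.log L)) ∧
      typeII σ T ≤ L⁻¹ := by
  classical
  obtain ⟨hρ, hρtr⟩ := hρ
  obtain ⟨hσ, -⟩ := hσ
  let lam := hρ.1.eigenvalues
  let x := hρ.1.eigenvectorBasis
  let y := hσ.1.eigenvectorBasis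
  let v (i : ι) := ∑ j with hσ.1.eigenvalues j < lam i / L, ⟪y j, x i⟫_ℂ • y j
  have hv : ∀ i, v i ∈ Submodule.span ℂ (y '' {j | hσ.1.eigenvalues j ≤ lam i / L}) := by
    intro i
    refine Submodule.span_mono (Set.image_mono fun j hj => ?_) (y.sum_inner_smul_mem_span _ _)
    simp only [Finset.coe_filter, Finset.mem_univ, true_and, Set.mem_ofPred_eq] at hj ⊢
    exact hj.le
  obtain ⟨T, hT, hTv, hTσ⟩ := exists_isTest_fixing_typeII_le hσ.1
    (fun i => div_nonneg (hρ.eigenvalues_pos i).le hL.le) hv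
  refine ⟨T, hT, ?_, hTσ.trans_eq ?_⟩
  · calc typeI ρ T ≤ ∑ i, lam i *
          ‖∑ j with ¬ hσ.1.eigenvalues j < lam i / L, ⟪y j, x i⟫_ℂ • y j‖ ^ 2 :=
          typeI_le_sum_eigenvalues_mul_norm_sq hρ.1 (fun i => (hρ.eigenvalues_pos i).le) hT
            (fun i => y.sum_filter_add_sum_filter_not_inner_smul _ _) hTv
      _ = specMassSet ρ σ (Set.Ici (-Real.log L)) := by
          simp_rw [specMassSet_Ici_neg_log hρ hσ hL, y.norm_sum_inner_smul_sq, not_lt]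
          rfl
  · rw [← Finset.sum_div, hρ.1.sum_eigenvalues_eq_re_trace, hρtr, Complex.one_re, one_div]

end QHT
end
end

section
/- Let X_1,…,X_n be independent real-valued random variables such that for every k ∈ {1,…,n}, a_k ≤ X_k ≤ b_k almost surely for constants a_k < b_k. Set p_k := (E[X_k] − a_k)/(b_k − a_k), assume 0 < p_k < 1 for every k, and define c_k := (1−2p_k)(b_k−a_k)²/(4·log((1−p_k)/p_k)) if p_k ≠ 1/2 and c_k := (b_k−a_k)²/8 if p_k = 1/2. Let μ_n := Σ_{k=1}^n E[X_k]. Then for every α ≥ 0: P(Σ_{k=1}^n X_k − μ_n ≤ −α·√n) ≤ exp(−α²·n/(4·Σ_{k=1}^n c_k)). -/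
open Matrix MeasureTheory
open scoped ComplexOrder

noncomputable section

namespace QHT

variable {ι : Type*} [Fintype ι] [DecidableEq ι]

/-!
By Chernoff's method and independence it suffices to bound the mgf of each centred `X_k`.
Since `exp` is convex, a variable in `[a, b]` has a smaller mgf than the two-point law on
`{a, b}` with the same mean, whose centred log-mgf is `log (1 - p + p e^s) - p s` at
`s = t (b - a)`. Kearns and Saul bound this by `K(p) s²`. For `p < 1/2` the difference
`φ(s) = K s² - log (1 - p + p e^s) + p s` is symmetric about `L = log ((1 - p) / p)`; on
`(-∞, L]` its derivative is concave (the logistic curve is convex there) and vanishes at `0` and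
`L`, so `φ` decreases and then increases there, with minimum `φ(0) = 0`. The case `p = 1/2` is
`log cosh x ≤ x² / 2`, and `p > 1/2` reduces to `1 - p` by `s ↦ -s`.
-/

open Real Set ProbabilityTheory
open scoped NNReal

lemma nonneg_of_hasDerivAt_of_concaveOn_Iic {f f' : ℝ → ℝ} {L s : ℝ} (hL : 0 < L)
    (hf : ∀ x, HasDerivAt f (f' x) x) (hf' : ConcaveOn ℝ (Iic L) f')
    (hf'0 : f' 0 = 0) (hf'L : f' L = 0) (hf0 : f 0 = 0) (hs : s ≤ L) : 0 ≤ f s := by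
  have hcont : Continuous f := continuous_iff_continuousAt.2 fun x ↦ (hf x).continuousAt
  have hderiv (D : Set ℝ) (x : ℝ) : HasDerivWithinAt f (f' x) (interior D) x :=
    (hf x).hasDerivWithinAt
  rcases le_total s 0 with hs0 | hs0
  · have hanti : AntitoneOn f (Iic 0) := by
      refine antitoneOn_of_hasDerivWithinAt_nonpos (convex_Iic 0) hcont.continuousOn
        (fun x _ ↦ hderiv _ x) fun x hx ↦ ?_
      rw [interior_Iic] at hx
      rw [← hf'0]
      exact hf'.left_le_of_le_right'' (mem_Iic.2 (hx.le.trans hL.le)) (mem_Iic.2 le_rfl)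
        hx.le hL (by rw [hf'0, hf'L])
    simpa [hf0] using hanti hs0 (mem_Iic.2 le_rfl) hs0
  · have hmono : MonotoneOn f (Icc 0 L) := by
      refine monotoneOn_of_hasDerivWithinAt_nonneg (convex_Icc 0 L) hcont.continuousOn
        (fun x _ ↦ hderiv _ x) fun x hx ↦ ?_
      have := hf'.ge_on_segment (mem_Iic.2 hL.le) (mem_Iic.2 le_rfl)
        (segment_eq_Icc hL.le ▸ interior_subset hx)
      simpa [hf'0, hf'L] using this
    simpa [hf0] using hmono (left_mem_Icc.2 hL.le) ⟨hs0, hs⟩ hs0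

/-- The cumulant generating function of `B - p` for a Bernoulli(`p`) variable `B`. -/
def centeredBernoulliCgf (p s : ℝ) : ℝ := log (1 - p + p * exp s) - p * s

def tiltedBernoulliMean (p s : ℝ) : ℝ := p * exp s / (1 - p + p * exp s)

/-- The value at `p = 1 / 2` is the limit of the general formula. -/
def kearnsSaulConst (p : ℝ) : ℝ :=
  if p = 1 / 2 then 1 / 8 else (1 - 2 * p) / (4 * log ((1 - p) / p))

section Bernoulli

variable {p : ℝ}

lemma one_sub_add_mul_exp_pos (hp0 : 0 < p) (hp1 : p < 1) (s : ℝ) : 0 < 1 - p + p * exp s := by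
  have := mul_pos hp0 (exp_pos s)
  linarith

lemma hasDerivAt_one_sub_add_mul_exp (p s : ℝ) :
    HasDerivAt (fun s ↦ 1 - p + p * exp s) (p * exp s) s := by
  simpa using ((hasDerivAt_exp s).const_mul p).const_add (1 - p)

lemma tiltedBernoulliMean_zero : tiltedBernoulliMean p 0 = p := by
  simp [tiltedBernoulliMean]

lemma tiltedBernoulliMean_monotone (hp0 : 0 < p) (hp1 : p < 1) :
    Monotone (tiltedBernoulliMean p) := by
  intro s t hst
  rw [tiltedBernoulliMean, tiltedBernoulliMean,
    div_le_div_iff₀ (one_sub_add_mul_exp_pos hp0 hp1 s) (one_sub_add_mul_exp_pos hp0 hp1 t)]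
  have := mul_le_mul_of_nonneg_left (exp_le_exp.2 hst) (mul_nonneg hp0.le (sub_pos.2 hp1).le)
  nlinarith

lemma tiltedBernoulliMean_le_half (hp0 : 0 < p) (hp1 : p < 1) {s : ℝ}
    (hs : s ≤ log ((1 - p) / p)) : tiltedBernoulliMean p s ≤ 1 / 2 := by
  have hexp : p * exp s ≤ 1 - p := by
    rw [← le_div_iff₀' hp0, ← exp_log (div_pos (sub_pos.2 hp1) hp0)]
    exact exp_le_exp.2 hs
  rw [tiltedBernoulliMean, div_le_iff₀ (one_sub_add_mul_exp_pos hp0 hp1 s)]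
  linarith

lemma hasDerivAt_centeredBernoulliCgf (hp0 : 0 < p) (hp1 : p < 1) (s : ℝ) :
    HasDerivAt (centeredBernoulliCgf p) (tiltedBernoulliMean p s - p) s := by
  have hD := hasDerivAt_one_sub_add_mul_exp p s
  exact (hD.log (one_sub_add_mul_exp_pos hp0 hp1 s).ne').sub ((hasDerivAt_id s).const_mul p)
    |>.congr_deriv (by simp [tiltedBernoulliMean])

lemma hasDerivAt_tiltedBernoulliMean (hp0 : 0 < p) (hp1 : p < 1) (s : ℝ) :
    HasDerivAt (tiltedBernoulliMean p)
      (tiltedBernoulliMean p s * (1 - tiltedBernoulliMean p s)) s := by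
  have hD := hasDerivAt_one_sub_add_mul_exp p s
  have hpos := (one_sub_add_mul_exp_pos hp0 hp1 s).ne'
  refine (((hasDerivAt_exp s).const_mul p).div hD hpos).congr_deriv ?_
  simp only [tiltedBernoulliMean]
  field_simp

lemma centeredBernoulliCgf_zero : centeredBernoulliCgf p 0 = 0 := by
  simp [centeredBernoulliCgf]

lemma centeredBernoulliCgf_one_sub_neg (hp0 : 0 < p) (hp1 : p < 1) (s : ℝ) :
    centeredBernoulliCgf (1 - p) (-s) = centeredBernoulliCgf p s := by
  have h : 1 - (1 - p) + (1 - p) * exp (-s) = (1 - p + p * exp s) * exp (-s) := by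
    rw [exp_neg]
    field_simp
    ring
  rw [centeredBernoulliCgf, centeredBernoulliCgf, h,
    log_mul (one_sub_add_mul_exp_pos hp0 hp1 s).ne' (exp_pos _).ne', log_exp]
  ring

lemma kearnsSaulConst_one_sub (p : ℝ) : kearnsSaulConst (1 - p) = kearnsSaulConst p := by
  by_cases hp : p = 1 / 2
  · rw [hp]; norm_num
  have hp' : 1 - p ≠ 1 / 2 := fun h ↦ hp (by linarith)
  rw [kearnsSaulConst, kearnsSaulConst, if_neg hp, if_neg hp', sub_sub_cancel,
    show p / (1 - p) = ((1 - p) / p)⁻¹ from (inv_div _ _).symm, log_inv]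
  ring

lemma centeredBernoulliCgf_half_le (s : ℝ) : centeredBernoulliCgf (1 / 2) s ≤ s ^ 2 / 8 := by
  have h : 1 - 1 / 2 + 1 / 2 * exp s = exp (s / 2) * cosh (s / 2) := by
    rw [cosh_eq, mul_div_assoc', mul_add, ← exp_add, ← exp_add]
    ring_nf
    rw [exp_zero]
    ring
  have hcosh := log_le_log (cosh_pos _) (cosh_le_exp_half_sq (s / 2))
  rw [log_exp] at hcosh
  rw [centeredBernoulliCgf, h, log_mul (exp_pos _).ne' (cosh_pos _).ne', log_exp]
  linarith

lemma centeredBernoulliCgf_two_mul_log_sub (hp0 : 0 < p) (hp1 : p < 1) (s : ℝ) :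
    centeredBernoulliCgf p (2 * log ((1 - p) / p) - s) =
      centeredBernoulliCgf p s + (1 - 2 * p) * (log ((1 - p) / p) - s) := by
  have hq : 0 < 1 - p := sub_pos.2 hp1
  have h : 1 - p + p * exp (2 * log ((1 - p) / p) - s) =
      (1 - p) / p * exp (-s) * (1 - p + p * exp s) := by
    rw [exp_sub, two_mul, exp_add, exp_log (div_pos hq hp0), exp_neg]
    field_simp
    ring
  rw [centeredBernoulliCgf, centeredBernoulliCgf, h,
    log_mul (by positivity) (one_sub_add_mul_exp_pos hp0 hp1 s).ne',
    log_mul (div_pos hq hp0).ne' (exp_pos _).ne', log_exp]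
  ring

lemma tiltedBernoulliMean_log_div (hp0 : 0 < p) (hp1 : p < 1) :
    tiltedBernoulliMean p (log ((1 - p) / p)) = 1 / 2 := by
  have hq : 0 < 1 - p := sub_pos.2 hp1
  rw [tiltedBernoulliMean, exp_log (div_pos hq hp0)]
  field_simp
  ring

lemma convexOn_tiltedBernoulliMean (hp0 : 0 < p) (hp1 : p < 1) :
    ConvexOn ℝ (Iic (log ((1 - p) / p))) (tiltedBernoulliMean p) := by
  have hm := hasDerivAt_tiltedBernoulliMean hp0 hp1
  refine MonotoneOn.convexOn_of_deriv (convex_Iic _)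
    (continuous_iff_continuousAt.2 fun x ↦ (hm x).continuousAt).continuousOn
    (fun x _ ↦ (hm x).differentiableAt.differentiableWithinAt) ?_
  rw [interior_Iic]
  intro x _ y hy hxy
  rw [(hm x).deriv, (hm y).deriv]
  have hmono := tiltedBernoulliMean_monotone hp0 hp1 hxy
  have hhalf := tiltedBernoulliMean_le_half hp0 hp1 (le_of_lt hy)
  nlinarith

lemma centeredBernoulliCgf_le_of_lt_half (hp0 : 0 < p) (hp : p < 1 / 2) (s : ℝ) :
    centeredBernoulliCgf p s ≤ kearnsSaulConst p * s ^ 2 := by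
  have hp1 : p < 1 := by linarith
  have hconv := convexOn_tiltedBernoulliMean hp0 hp1
  have hmL := tiltedBernoulliMean_log_div hp0 hp1
  have hrefl := centeredBernoulliCgf_two_mul_log_sub hp0 hp1 s
  have hL : 0 < log ((1 - p) / p) := log_pos (by rw [lt_div_iff₀ hp0]; linarith)
  have hK : kearnsSaulConst p = (1 - 2 * p) / (4 * log ((1 - p) / p)) := if_neg hp.ne
  generalize log ((1 - p) / p) = L at hconv hmL hrefl hL hK
  set K := kearnsSaulConst p
  have hKL : 4 * K * L = 1 - 2 * p := by
    rw [hK]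
    field_simp
  set φ := fun s ↦ K * s ^ 2 - centeredBernoulliCgf p s with hφ_def
  set d := fun s ↦ 2 * K * s - (tiltedBernoulliMean p s - p) with hd_def
  have hφ (x : ℝ) : HasDerivAt φ (d x) x :=
    ((hasDerivAt_pow 2 x).const_mul K).sub (hasDerivAt_centeredBernoulliCgf hp0 hp1 x)
      |>.congr_deriv (by simp only [hd_def]; ring)
  have hd : ConcaveOn ℝ (Iic L) d := by
    refine ⟨convex_Iic L, fun x hx y hy a b ha hb hab ↦ ?_⟩
    have := hconv.2 hx hy ha hb hab
    simp only [smul_eq_mul, hd_def] at this ⊢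
    linear_combination this + p * hab
  have hd0 : d 0 = 0 := by simp [hd_def, tiltedBernoulliMean_zero]
  have hdL : d L = 0 := by
    simp only [hd_def, hmL]
    linarith
  have hφ0 : φ 0 = 0 := by simp [hφ_def, centeredBernoulliCgf_zero]
  have hle : ∀ s ≤ L, 0 ≤ φ s := fun s hs ↦
    nonneg_of_hasDerivAt_of_concaveOn_Iic hL hφ hd hd0 hdL hφ0 hs
  have hsymm : φ (2 * L - s) = φ s := by
    simp only [hφ_def, hrefl]
    linear_combination (L - s) * hKL
  rcases le_total s L with hs | hs
  · linarith [hle s hs]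
  · linarith [hle (2 * L - s) (by linarith), hsymm]

lemma kearnsSaulConst_pos (hp0 : 0 < p) (hp1 : p < 1) : 0 < kearnsSaulConst p := by
  have h_lt_half {q : ℝ} (hq0 : 0 < q) (hq : q < 1 / 2) : 0 < kearnsSaulConst q := by
    have : 0 < log ((1 - q) / q) := log_pos (by rw [lt_div_iff₀ hq0]; linarith)
    rw [kearnsSaulConst, if_neg hq.ne]
    exact div_pos (by linarith) (by positivity)
  rcases lt_trichotomy p (1 / 2) with hp | rfl | hp
  · exact h_lt_half hp0 hp
  · norm_num [kearnsSaulConst]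
  · rw [← kearnsSaulConst_one_sub]
    exact h_lt_half (by linarith) (by linarith)

theorem centeredBernoulliCgf_le (hp0 : 0 < p) (hp1 : p < 1) (s : ℝ) :
    centeredBernoulliCgf p s ≤ kearnsSaulConst p * s ^ 2 := by
  rcases lt_trichotomy p (1 / 2) with hp | rfl | hp
  · exact centeredBernoulliCgf_le_of_lt_half hp0 hp s
  · rw [kearnsSaulConst, if_pos rfl]
    linarith [centeredBernoulliCgf_half_le s]
  · rw [← centeredBernoulliCgf_one_sub_neg hp0 hp1, ← kearnsSaulConst_one_sub, ← neg_sq]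
    exact centeredBernoulliCgf_le_of_lt_half (by linarith) (by linarith) (-s)

end Bernoulli

section BoundedRandomVariable

variable {Ω : Type*} {m : MeasurableSpace Ω} {μ : Measure Ω} [IsProbabilityMeasure μ]
  {X : Ω → ℝ} {a b : ℝ}

/-- By convexity of `exp`, the mgf of `X` is dominated by that of the law on `{a, b}` with the
same mean. -/
lemma mgf_le_of_mem_Icc (hab : a < b) (hm : AEMeasurable X μ)
    (hX : ∀ᵐ ω ∂μ, X ω ∈ Icc a b) (t : ℝ) :
    mgf X μ t ≤ ((b - μ[X]) * exp (t * a) + (μ[X] - a) * exp (t * b)) / (b - a) := by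
  have hba : 0 < b - a := sub_pos.2 hab
  have hint : Integrable X μ := Integrable.of_mem_Icc a b hm hX
  have hchord : ∀ᵐ ω ∂μ, exp (t * X ω) ≤
      ((b - X ω) * exp (t * a) + (X ω - a) * exp (t * b)) / (b - a) := by
    filter_upwards [hX] with ω ⟨hωa, hωb⟩
    have h := convexOn_exp.2 (mem_univ (t * a)) (mem_univ (t * b))
      (div_nonneg (sub_nonneg.2 hωb) hba.le) (div_nonneg (sub_nonneg.2 hωa) hba.le)
      (by field_simp; ring)
    have hcomb : (b - X ω) / (b - a) * (t * a) + (X ω - a) / (b - a) * (t * b) = t * X ω := by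
      field_simp
      ring
    simp only [smul_eq_mul, hcomb] at h
    exact h.trans_eq (by ring)
  calc mgf X μ t
      ≤ ∫ ω, ((b - X ω) * exp (t * a) + (X ω - a) * exp (t * b)) / (b - a) ∂μ :=
        integral_mono_ae (integrable_exp_mul_of_mem_Icc hm hX) (by fun_prop) hchord
    _ = ((b - μ[X]) * exp (t * a) + (μ[X] - a) * exp (t * b)) / (b - a) := by
        rw [integral_div, integral_add (by fun_prop) (by fun_prop), integral_mul_const,
          integral_mul_const, integral_sub (integrable_const b) hint,
          integral_sub hint (integrable_const a)]
        simp

/-- **Kearns–Saul lemma**, sharpening Hoeffding's lemma `hasSubgaussianMGF_of_mem_Icc`, whose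
parameter `(b - a) ^ 2 / 4` corresponds to `kearnsSaulConst (1 / 2) = 1 / 8`. -/
theorem hasSubgaussianMGF_of_mem_Icc_kearnsSaul (hab : a < b) (hm : AEMeasurable X μ)
    (hX : ∀ᵐ ω ∂μ, X ω ∈ Icc a b) {p : ℝ} (hp : p = (μ[X] - a) / (b - a))
    (hp0 : 0 < p) (hp1 : p < 1) :
    HasSubgaussianMGF (fun ω ↦ X ω - μ[X])
      (2 * kearnsSaulConst p * (b - a) ^ 2).toNNReal μ where
  integrable_exp_mul := (hasSubgaussianMGF_of_mem_Icc hm hX).integrable_exp_mul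
  mgf_le t := by
    have hμ : μ[X] = a + p * (b - a) := by
      rw [hp]
      field_simp [(sub_pos.2 hab).ne']
      ring
    have hK : 0 ≤ 2 * kearnsSaulConst p * (b - a) ^ 2 := by
      have := kearnsSaulConst_pos hp0 hp1
      positivity
    have hcentered : mgf (fun ω ↦ X ω - μ[X]) μ t = mgf X μ t * exp (t * -μ[X]) := by
      simp_rw [sub_eq_add_neg]
      exact mgf_add_const _
    have htwo_point : ((b - μ[X]) * exp (t * a) + (μ[X] - a) * exp (t * b)) / (b - a) *
        exp (t * -μ[X]) = exp (centeredBernoulliCgf p (t * (b - a))) := by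
      have hb : exp (t * b) = exp (t * a) * exp (t * (b - a)) := by
        rw [← exp_add]
        ring_nf
      have hμ' : exp (t * -μ[X]) = (exp (t * a) * exp (p * (t * (b - a))))⁻¹ := by
        rw [← exp_add, ← exp_neg, hμ]
        ring_nf
      rw [centeredBernoulliCgf, exp_sub, exp_log (one_sub_add_mul_exp_pos hp0 hp1 _), hb, hμ',
        hμ]
      field_simp [(sub_pos.2 hab).ne']
      ring
    calc mgf (fun ω ↦ X ω - μ[X]) μ t
        ≤ ((b - μ[X]) * exp (t * a) + (μ[X] - a) * exp (t * b)) / (b - a) *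
            exp (t * -μ[X]) := by
          rw [hcentered]
          gcongr
          exact mgf_le_of_mem_Icc hab hm hX t
      _ = exp (centeredBernoulliCgf p (t * (b - a))) := htwo_point
      _ ≤ exp (kearnsSaulConst p * (t * (b - a)) ^ 2) :=
          exp_le_exp.2 (centeredBernoulliCgf_le hp0 hp1 _)
      _ = _ := by
          rw [Real.coe_toNNReal _ hK]
          ring_nf

end BoundedRandomVariable

/-- **Kearns–Saul inequality.** For independent real random variables `X_k ∈ [a_k, b_k]` a.s.,
with `p_k = (E[X_k] - a_k)/(b_k - a_k)` and constants `c_k` as below,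
`P(Σ X_k - μ_n ≤ -α√n) ≤ exp(-α² n / (4 Σ c_k))` for every `α ≥ 0`. -/
theorem kearns_saul
    {Ω : Type*} {m0 : MeasurableSpace Ω} {P : Measure Ω} [IsProbabilityMeasure P]
    (n : ℕ) (X : Fin n → Ω → ℝ) (hmeas : ∀ k, Measurable (X k))
    (hindep : ProbabilityTheory.iIndepFun X P)
    (a b : Fin n → ℝ) (hab : ∀ k, a k < b k)
    (hbdd : ∀ k, ∀ᵐ ω ∂P, X k ω ∈ Set.Icc (a k) (b k))
    (p : Fin n → ℝ) (hp : ∀ k, p k = ((∫ ω, X k ω ∂P) - a k) / (b k - a k))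
    (hp0 : ∀ k, 0 < p k) (hp1 : ∀ k, p k < 1)
    (c : Fin n → ℝ)
    (hc : ∀ k, c k = if p k = 1 / 2 then (b k - a k) ^ 2 / 8
      else (1 - 2 * p k) * (b k - a k) ^ 2 / (4 * Real.log ((1 - p k) / p k)))
    (α : ℝ) (hα : 0 ≤ α) :
    P {ω | ∑ k, X k ω - ∑ k, ∫ ω', X k ω' ∂P ≤ -α * Real.sqrt n} ≤
      ENNReal.ofReal (Real.exp (-(α ^ 2 * n) / (4 * ∑ k, c k))) := by
  have hc' (k : Fin n) : c k = kearnsSaulConst (p k) * (b k - a k) ^ 2 := by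
    rw [hc k, kearnsSaulConst]
    split_ifs <;> ring
  have hc_nonneg (k : Fin n) : 0 ≤ 2 * c k := by
    have := kearnsSaulConst_pos (hp0 k) (hp1 k)
    rw [hc' k]
    positivity
  have hsub (k : Fin n) :
      HasSubgaussianMGF (fun ω ↦ -(X k ω - ∫ ω', X k ω' ∂P)) (2 * c k).toNNReal P := by
    rw [hc', ← mul_assoc]
    exact (hasSubgaussianMGF_of_mem_Icc_kearnsSaul (hab k) (hmeas k).aemeasurable (hbdd k) (hp k)
      (hp0 k) (hp1 k)).neg
  have hindep' : iIndepFun (fun k ω ↦ -(X k ω - ∫ ω', X k ω' ∂P)) P :=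
    hindep.comp (fun k x ↦ -(x - ∫ ω', X k ω' ∂P)) fun k ↦ by fun_prop
  have htail := HasSubgaussianMGF.measure_sum_ge_le_of_iIndepFun hindep' (fun k _ ↦ hsub k)
    (s := Finset.univ) (ε := α * Real.sqrt n) (by positivity)
  have hsum : ((∑ k, (2 * c k).toNNReal : ℝ≥0) : ℝ) = 2 * ∑ k, c k := by
    simp_rw [NNReal.coe_sum, Real.coe_toNNReal _ (hc_nonneg _), Finset.mul_sum]
  rw [hsum, mul_pow, Real.sq_sqrt (Nat.cast_nonneg n), ← mul_assoc] at htail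
  calc P {ω | ∑ k, X k ω - ∑ k, ∫ ω', X k ω' ∂P ≤ -α * Real.sqrt n}
      = P {ω | α * Real.sqrt n ≤ ∑ k, -(X k ω - ∫ ω', X k ω' ∂P)} := by
        congr with ω
        simp only [Finset.sum_neg_distrib, Finset.sum_sub_distrib]
        constructor <;> intro h <;> linarith
    _ ≤ _ := by
        rw [← ofReal_measureReal]
        gcongr
        convert htail using 3
        ring

end QHT

end
end
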